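/- arXiv:2306.05130 — 5 statements merged into one kernel-verified Lean document; each statement's English description precedes it below -/
import Mathlib

section
/- Fix d ≥ 2 and k ≥ 1, and let Λ_m denote the induced subgraph of Z^d on the box [−m,m]^d. Let Ω^1_∅(Λ_m) be the set of configurations ω on the edges of Λ_m such that every vertex v with ∂ω(v) = 1 has sup-norm exactly m (all sources lie on the boundary of the box); this is a subgroup of (ZMod 2)^{E(Λ_m)}. Then the following three probability measures on configurations of Λ_k coincide: (i) the pushforward under restriction to the edges of Λ_k of the uniform measure on Ω_∅(Λ_{k+1}); (ii) the pushforward under restriction to the edges of Λ_k of the uniform measure on Ω^1_∅(Λ_{k+1}); (iii) the uniform measure on Ω^1_∅(Λ_k). -/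
open MeasureTheory

noncomputable section

instance : MeasurableSpace (ZMod 2) := ⊤

/-- The source (mod-2 boundary) of a configuration on a set `E` of edges, at a vertex `v`:
the mod-2 number of open edges incident to `v`. -/
def srcAt {V : Type*} {E : Set (Sym2 V)} (ω : E → ZMod 2) (v : V) : ZMod 2 :=
  (Set.ncard {e : E | ω e = 1 ∧ v ∈ (e : Sym2 V)} : ZMod 2)

/-- A configuration is even (sourceless). -/
def IsEvenConf {V : Type*} {E : Set (Sym2 V)} (ω : E → ZMod 2) : Prop :=
  ∀ v : V, srcAt ω v = 0

/-- `μ` is the uniform even subgraph measure (the Haar probability measure on the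
group of even configurations): a probability measure supported on even configurations
and invariant under translation (symmetric difference) by every even configuration. -/
def IsUEG {V : Type*} (E : Set (Sym2 V)) (μ : Measure (E → ZMod 2)) : Prop :=
  IsProbabilityMeasure μ ∧ μ {ω | IsEvenConf ω} = 1 ∧
    ∀ γ : E → ZMod 2, IsEvenConf γ → Measure.map (fun ω => ω + γ) μ = μ

/-- The graph of open edges of a configuration. -/
def openGraph {V : Type*} {E : Set (Sym2 V)} (ω : E → ZMod 2) : SimpleGraph V :=
  SimpleGraph.fromEdgeSet {e : Sym2 V | ∃ h : e ∈ E, ω ⟨e, h⟩ = 1}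

/-- The connected component of `v` in the graph of open edges is infinite. -/
def PercolatesAt {V : Type*} {E : Set (Sym2 V)} (ω : E → ZMod 2) (v : V) : Prop :=
  {w : V | (openGraph ω).Reachable v w}.Infinite

/-- The hypercubic lattice `ℤ^d`. -/
def latticeGraph (d : ℕ) : SimpleGraph (Fin d → ℤ) where
  Adj u v := ∑ i, |u i - v i| = 1
  symm := ⟨fun u v h => by simpa [abs_sub_comm] using h⟩
  loopless := ⟨fun u h => by simp at h⟩

/-- The edges of the box `Λ_m = [-m,m]^d` (the induced subgraph of `ℤ^d`). -/
def boxEdges (d m : ℕ) : Set (Sym2 (Fin d → ℤ)) :=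
  {e ∈ (latticeGraph d).edgeSet | ∀ v ∈ e, ∀ i, |v i| ≤ (m : ℤ)}

lemma boxEdges_mono (d m : ℕ) : boxEdges d m ⊆ boxEdges d (m + 1) := by
  intro e he
  exact ⟨he.1, fun v hv i => (he.2 v hv i).trans (by push_cast; omega)⟩

/-- Restriction of a configuration to a smaller edge set. -/
def restrictConf {V : Type*} {E' E : Set (Sym2 V)} (h : E' ⊆ E) (ω : E → ZMod 2) :
    E' → ZMod 2 := fun e => ω ⟨e.1, h e.2⟩

/-- Wired even configurations on the box `Λ_m`: all sources lie on the boundary of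
the box, i.e. every vertex `v` with `∂ω(v) = 1` has sup-norm exactly `m`. -/
def wiredEvens (d m : ℕ) : Set (boxEdges d m → ZMod 2) :=
  {ω | ∀ v : Fin d → ℤ, srcAt ω v = 1 →
    (∀ i, |v i| ≤ (m : ℤ)) ∧ ∃ i, |v i| = (m : ℤ)}

/-- The uniform probability measure on a (finite, nonempty) set `S`. -/
def uniformOn {α : Type*} [MeasurableSpace α] (S : Set α) : Measure α :=
  (S.ncard : ENNReal)⁻¹ • Measure.sum (fun s : S => Measure.dirac (s : α))

/-!
The restriction map from configurations on `Λ_{k+1}` to configurations on `Λ_k` is a group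
homomorphism, so it pushes the uniform measure on a subgroup forward to the uniform measure on
the image subgroup: all fibres are cosets of the kernel. Both images equal `Ω¹_∅(Λ_k)`.
Restriction only creates sources on the boundary of `Λ_k`. Conversely, a configuration with
sources on `∂Λ_k` becomes even after adding, for each source `u`, a path in the annulus
`Λ_{k+1} \ Λ_k` from `u` to the corner `(k+1, …, k+1)`; the corner is then an endpoint of an
even number of paths by the handshake lemma. The outer boundary of the annulus is connected
because `d ≥ 2`.
-/

open scoped ENNReal

section UniformMeasure

variable {α β : Type*}

lemma Set.ncard_eq_mul_ncard_image_of_ncard_fiber {S : Set α} (hS : S.Finite) (f : α → β)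
    {n : ℕ} (hfib : ∀ b ∈ f '' S, (S ∩ f ⁻¹' {b}).ncard = n) :
    S.ncard = n * (f '' S).ncard := by
  classical
  lift S to Finset α using hS
  rw [← Finset.coe_image, Set.ncard_coe_finset, Set.ncard_coe_finset,
    Finset.card_eq_sum_card_image f S, Finset.sum_const_nat, mul_comm]
  intro b hb
  rw [← hfib b (by simpa using hb), ← Set.ncard_coe_finset, Finset.coe_filter]
  rfl

lemma AddSubgroup.ncard_inter_preimage_singleton [AddGroup α] [AddGroup β]
    (φ : α →+ β) (H : AddSubgroup α) {b : β} (hb : b ∈ φ '' H) :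
    ((H : Set α) ∩ φ ⁻¹' {b}).ncard = ((H ⊓ φ.ker : AddSubgroup α) : Set α).ncard := by
  obtain ⟨a, ha, rfl⟩ := hb
  have hcoset : (H : Set α) ∩ φ ⁻¹' {φ a} = (a + ·) '' (H ⊓ φ.ker : AddSubgroup α) := by
    ext x
    simp only [Set.mem_inter_iff, Set.mem_preimage, Set.mem_singleton_iff, Set.mem_image,
      SetLike.mem_coe, AddSubgroup.mem_inf, AddMonoidHom.mem_ker]
    constructor
    · rintro ⟨hx, hφx⟩
      exact ⟨-a + x, ⟨H.add_mem (H.neg_mem ha) hx, by simp [hφx]⟩, add_neg_cancel_left a x⟩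
    · rintro ⟨y, ⟨hy, hφy⟩, rfl⟩
      exact ⟨H.add_mem ha hy, by simp [hφy]⟩
  rw [hcoset, Set.ncard_image_of_injective _ (add_right_injective a)]

variable [MeasurableSpace α] [DiscreteMeasurableSpace α]

lemma uniformOn_apply {S : Set α} (hS : S.Finite) (A : Set α) :
    uniformOn S A = (S.ncard : ℝ≥0∞)⁻¹ * (S ∩ A).ncard := by
  rw [uniformOn, Measure.smul_apply, Measure.sum_apply _ (.of_discrete), smul_eq_mul]
  congr 1
  simp only [Measure.dirac_apply' _ (MeasurableSet.of_discrete (s := A))]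
  rw [tsum_subtype S (A.indicator 1), Set.indicator_indicator, ← tsum_subtype]
  simp only [Pi.one_apply]
  rw [ENNReal.tsum_set_one, ← (hS.inter_of_left A).cast_ncard_eq]
  rfl

lemma map_uniformOn_of_ncard_fiber [MeasurableSpace β] [DiscreteMeasurableSpace β] [Countable β]
    {S : Set α} (hS : S.Finite) (f : α → β) {n : ℕ}
    (hfib : ∀ b ∈ f '' S, (S ∩ f ⁻¹' {b}).ncard = n) :
    (uniformOn S).map f = uniformOn (f '' S) := by
  refine Measure.ext_of_singleton fun b => ?_
  rw [Measure.map_apply .of_discrete .of_discrete, uniformOn_apply hS,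
    uniformOn_apply (hS.image f), Set.ncard_eq_mul_ncard_image_of_ncard_fiber hS f hfib]
  by_cases hb : b ∈ f '' S
  · have hn : n ≠ 0 := by
      obtain ⟨a, ha, rfl⟩ := hb
      rw [← hfib _ ⟨a, ha, rfl⟩]
      exact (Set.ncard_pos (hS.inter_of_left (f ⁻¹' {f a}))).mpr ⟨a, ha, rfl⟩ |>.ne'
    rw [hfib b hb, Set.inter_eq_right.mpr (Set.singleton_subset_iff.mpr hb),
      Set.ncard_singleton, Nat.cast_mul, ENNReal.mul_inv (by simp) (by simp), mul_right_comm,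
      ENNReal.inv_mul_cancel (by simpa using hn) (by simp), Nat.cast_one, one_mul, mul_one]
  · have hfiber : S ∩ f ⁻¹' {b} = ∅ :=
      Set.eq_empty_of_forall_notMem fun a ⟨ha, hfa⟩ => hb ⟨a, ha, hfa⟩
    rw [hfiber, Set.inter_singleton_eq_empty.mpr hb]
    simp

lemma map_uniformOn_addSubgroup [AddGroup α] [Finite α] [AddGroup β] [MeasurableSpace β]
    [DiscreteMeasurableSpace β] [Countable β] (φ : α →+ β) (H : AddSubgroup α) :
    (uniformOn (H : Set α)).map φ = uniformOn (φ '' H) :=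
  map_uniformOn_of_ncard_fiber (Set.toFinite _) φ fun _ hb =>
    H.ncard_inter_preimage_singleton φ hb

end UniformMeasure

section Sources

variable {V : Type*} {E : Set (Sym2 V)}

lemma srcAt_eq_sum [Fintype E] [DecidableEq V] (ω : E → ZMod 2) (v : V) :
    srcAt ω v = ∑ e : E, if v ∈ (e : Sym2 V) then ω e else 0 := by
  rw [srcAt, Set.ncard_eq_toFinset_card', Set.toFinset_ofPred, Finset.card_filter, Nat.cast_sum]
  refine Finset.sum_congr rfl fun e _ => ?_
  have : ∀ x : ZMod 2, x = 0 ∨ x = 1 := by decide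
  by_cases hv : v ∈ (e : Sym2 V) <;> rcases this (ω e) with h | h <;> simp [hv, h]

lemma srcAt_zero (v : V) : srcAt (0 : E → ZMod 2) v = 0 := by
  simp [srcAt]

lemma srcAt_add [Finite E] (ω γ : E → ZMod 2) (v : V) :
    srcAt (ω + γ) v = srcAt ω v + srcAt γ v := by
  classical
  have := Fintype.ofFinite E
  simp only [srcAt_eq_sum, Pi.add_apply, ← Finset.sum_add_distrib, ite_add_ite, add_zero]

variable (E) in
def srcHom [Finite E] (v : V) : (E → ZMod 2) →+ ZMod 2 where
  toFun ω := srcAt ω v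
  map_zero' := srcAt_zero v
  map_add' ω γ := srcAt_add ω γ v

lemma srcAt_single [Finite E] [DecidableEq V] (e : E) (v : V) :
    srcAt (Pi.single e 1) v = if v ∈ (e : Sym2 V) then 1 else 0 := by
  classical
  have := Fintype.ofFinite E
  rw [srcAt_eq_sum, Finset.sum_eq_single e] <;> simp +contextual

lemma exists_mem_of_srcAt_ne_zero {ω : E → ZMod 2} {v : V} (h : srcAt ω v ≠ 0) :
    ∃ e : E, ω e = 1 ∧ v ∈ (e : Sym2 V) := by
  by_contra! hc
  have : {e : E | ω e = 1 ∧ v ∈ (e : Sym2 V)} = ∅ :=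
    Set.eq_empty_of_forall_notMem fun e ⟨he, hv⟩ => hc e he hv
  simp [srcAt, this] at h

lemma srcAt_restrictConf {E' : Set (Sym2 V)} (h : E' ⊆ E) (ω : E → ZMod 2) {v : V}
    (hv : ∀ e : E, ω e = 1 → v ∈ (e : Sym2 V) → (e : Sym2 V) ∈ E') :
    srcAt (restrictConf h ω) v = srcAt ω v := by
  have hinj : Function.Injective (fun e : E' => (⟨e, h e.2⟩ : E)) :=
    fun a b hab => by simpa [Subtype.ext_iff] using hab
  have himg : {e : E | ω e = 1 ∧ v ∈ (e : Sym2 V)} = (fun e : E' => (⟨e, h e.2⟩ : E)) ''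
      {e : E' | restrictConf h ω e = 1 ∧ v ∈ (e : Sym2 V)} := by
    ext e
    constructor
    · rintro ⟨h1, h2⟩
      exact ⟨⟨e, hv e h1 h2⟩, ⟨h1, h2⟩, rfl⟩
    · rintro ⟨e', he', rfl⟩
      exact he'
  rw [srcAt, srcAt, himg, Set.ncard_image_of_injective _ hinj]

open Classical in
variable (E) in
def extendConf {E' : Set (Sym2 V)} (ω' : E' → ZMod 2) : E → ZMod 2 :=
  fun e => if he : (e : Sym2 V) ∈ E' then ω' ⟨e, he⟩ else 0

lemma restrictConf_extendConf {E' : Set (Sym2 V)} (h : E' ⊆ E) (ω' : E' → ZMod 2) :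
    restrictConf h (extendConf E ω') = ω' := by
  funext e
  simp [restrictConf, extendConf]

lemma srcAt_extendConf {E' : Set (Sym2 V)} (h : E' ⊆ E) (ω' : E' → ZMod 2) (v : V) :
    srcAt (extendConf E ω') v = srcAt ω' v := by
  rw [← srcAt_restrictConf h (extendConf E ω'), restrictConf_extendConf]
  intro e he _
  by_contra hne
  simp [extendConf, hne] at he

/-- Handshake lemma: each edge is counted at both of its endpoints. -/
lemma sum_srcAt_eq_zero [Fintype E] [DecidableEq V] (hE : ∀ e ∈ E, ¬ e.IsDiag)
    (ω : E → ZMod 2) {T : Finset V} (hT : ∀ e ∈ E, ∀ v ∈ e, v ∈ T) :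
    ∑ v ∈ T, srcAt ω v = 0 := by
  simp_rw [srcAt_eq_sum]
  rw [Finset.sum_comm]
  refine Finset.sum_eq_zero fun e _ => ?_
  have hends : T.filter (· ∈ (e : Sym2 V)) = (e : Sym2 V).toFinset := by
    ext v
    simp only [Finset.mem_filter, Sym2.mem_toFinset, and_iff_right_iff_imp]
    exact hT e e.2 v
  rw [← Finset.sum_filter, hends, Finset.sum_const,
    Sym2.card_toFinset_of_not_isDiag _ (hE e e.2), two_nsmul, CharTwo.add_self_eq_zero]

lemma srcAt_eq_zero_of_forall_ne [Finite E] (hE : ∀ e ∈ E, ¬ e.IsDiag) (ω : E → ZMod 2)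
    {c : V} (h : ∀ v ≠ c, srcAt ω v = 0) : srcAt ω c = 0 := by
  classical
  have := Fintype.ofFinite E
  have hsum := sum_srcAt_eq_zero hE ω
    (T := insert c (Finset.univ.biUnion fun e : E => (e : Sym2 V).toFinset))
    fun e he v hv => Finset.mem_insert_of_mem <| Finset.mem_biUnion.mpr
      ⟨⟨e, he⟩, Finset.mem_univ _, Sym2.mem_toFinset.mpr hv⟩
  rwa [Finset.sum_eq_single_of_mem c (Finset.mem_insert_self _ _) fun v _ hv => h v hv] at hsum

lemma finite_setOf_srcAt_ne_zero [Finite E] (ω : E → ZMod 2) :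
    {v | srcAt ω v ≠ 0}.Finite := by
  classical
  refine (Set.finite_iUnion fun e : E => (e : Sym2 V).toFinset.finite_toSet).subset fun v hv => ?_
  obtain ⟨e, -, he⟩ := exists_mem_of_srcAt_ne_zero hv
  exact Set.mem_iUnion.mpr ⟨e, Sym2.mem_toFinset.mpr he⟩

variable (E) in
def sourcesWithin [Finite E] (B : Set V) : AddSubgroup (E → ZMod 2) where
  carrier := {ω | ∀ v ∉ B, srcAt ω v = 0}
  zero_mem' _ _ := srcAt_zero _
  add_mem' ha hb v hv := by rw [srcAt_add, ha v hv, hb v hv, add_zero]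
  neg_mem' {ω} hω v hv := (map_neg (srcHom E v) ω).trans (neg_eq_zero.mpr (hω v hv))

lemma coe_sourcesWithin_empty [Finite E] :
    (sourcesWithin E ∅ : Set (E → ZMod 2)) = {ω | IsEvenConf ω} := by
  ext ω
  simp [sourcesWithin, IsEvenConf]

def restrictHom {E' : Set (Sym2 V)} (h : E' ⊆ E) : (E → ZMod 2) →+ (E' → ZMod 2) where
  toFun := restrictConf h
  map_zero' := rfl
  map_add' _ _ := rfl

end Sources

section Extension

variable {V : Type*} {E : Set (Sym2 V)}

open SimpleGraph

lemma exists_srcAt_eq_of_reachable [Finite E] [DecidableEq V] {F : Set (Sym2 V)} (hF : F ⊆ E)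
    {u w : V} (huw : (fromEdgeSet F).Reachable u w) :
    ∃ γ : E → ZMod 2, (∀ e : E, (e : Sym2 V) ∉ F → γ e = 0) ∧
      ∀ v, srcAt γ v = (if v = u then 1 else 0) + (if v = w then 1 else 0) := by
  obtain ⟨p⟩ := huw
  induction p with
  | nil => exact ⟨0, fun _ _ => rfl, fun v => by rw [srcAt_zero, CharTwo.add_self_eq_zero]⟩
  | @cons u x w hadj p ih =>
    obtain ⟨γ, hγF, hγ⟩ := ih
    obtain ⟨hux, hne⟩ := (fromEdgeSet_adj F).mp hadj
    refine ⟨Pi.single ⟨s(u, x), hF hux⟩ 1 + γ, fun e he => ?_, fun v => ?_⟩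
    · have : e ≠ ⟨s(u, x), hF hux⟩ := fun h => he (h ▸ hux)
      simp [this, hγF e he]
    · rw [srcAt_add, srcAt_single, hγ]
      by_cases hvu : v = u <;> by_cases hvx : v = x <;> by_cases hvw : v = w <;> simp_all <;> decide

lemma exists_isEvenConf_restrictConf_eq [Finite E] (hE : ∀ e ∈ E, ¬ e.IsDiag)
    {E' : Set (Sym2 V)} (h : E' ⊆ E) (c : V) (ω' : E' → ZMod 2)
    (hreach : ∀ v, srcAt ω' v ≠ 0 → (fromEdgeSet (E \ E')).Reachable v c) :
    ∃ ω : E → ZMod 2, IsEvenConf ω ∧ restrictConf h ω = ω' := by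
  classical
  have := Finite.Set.subset E h
  set S := (finite_setOf_srcAt_ne_zero ω').toFinset
  choose γ hγE' hγ using fun u (hu : u ∈ S) =>
    exists_srcAt_eq_of_reachable Set.sdiff_subset (hreach u (by simpa [S] using hu))
  refine ⟨extendConf E ω' + ∑ u ∈ S.attach, γ u u.2, ?_, ?_⟩
  · -- away from `c` every source of `ω'` is cancelled by its own path; at `c` the handshake
    -- lemma takes over
    have hsrc : ∀ v ≠ c, srcAt (extendConf E ω' + ∑ u ∈ S.attach, γ u u.2) v = 0 := by
      intro v hvc
      have hsum : srcAt (∑ u ∈ S.attach, γ u u.2) v = ∑ u ∈ S.attach, srcAt (γ u u.2) v :=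
        map_sum (srcHom E v) _ _
      rw [srcAt_add, srcAt_extendConf h, hsum]
      simp only [hγ, hvc, if_false, add_zero]
      rw [Finset.sum_attach S fun u => if v = u then 1 else 0, Finset.sum_ite_eq]
      have : ∀ x : ZMod 2, x + (if x ≠ 0 then 1 else 0) = 0 := by decide
      simpa [S] using this (srcAt ω' v)
    intro v
    by_cases hvc : v = c
    · exact hvc ▸ srcAt_eq_zero_of_forall_ne hE _ hsrc
    · exact hsrc v hvc
  · funext e
    change extendConf E ω' ⟨e, h e.2⟩ + (∑ u ∈ S.attach, γ u u.2) ⟨e, h e.2⟩ = ω' e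
    rw [Finset.sum_apply, Finset.sum_eq_zero fun u _ => hγE' u.1 u.2 _ fun he => he.2 e.2,
      add_zero]
    exact congrFun (restrictConf_extendConf h ω') e

end Extension

section Lattice

variable {d : ℕ}

instance (d m : ℕ) : Finite (boxEdges d m) :=
  Set.Finite.to_subtype <|
    (Fintype.piFinset fun _ : Fin d => Finset.Icc (-(m : ℤ)) m).sym2.finite_toSet.subset
      fun _ he => Finset.mem_sym2_iff.mpr fun v hv => Fintype.mem_piFinset.mpr fun i =>
        Finset.mem_Icc.mpr (abs_le.mp (he.2 v hv i))

lemma not_isDiag_of_mem_boxEdges {m : ℕ} {e : Sym2 (Fin d → ℤ)} (he : e ∈ boxEdges d m) :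
    ¬ e.IsDiag :=
  (latticeGraph d).not_isDiag_of_mem_edgeSet he.1

lemma latticeGraph_adj_update {u : Fin d → ℤ} {j : Fin d} {t : ℤ} (h : |u j - t| = 1) :
    (latticeGraph d).Adj u (Function.update u j t) := by
  show ∑ i, |u i - Function.update u j t i| = 1
  rw [Finset.sum_eq_single j (fun i _ hi => by simp [Function.update_of_ne hi]) (by simp)]
  simpa using h

lemma abs_sub_le_one_of_latticeGraph_adj {u w : Fin d → ℤ} (h : (latticeGraph d).Adj u w)
    (i : Fin d) : |u i - w i| ≤ 1 :=
  (Finset.single_le_sum (f := fun j => |u j - w j|) (fun _ _ => abs_nonneg _)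
    (Finset.mem_univ i)).trans_eq h

def boxBoundary (d m : ℕ) : Set (Fin d → ℤ) :=
  {v | (∀ i, |v i| ≤ (m : ℤ)) ∧ ∃ i, |v i| = (m : ℤ)}

lemma mem_boxEdges_of_mem_of_lt {k : ℕ} {e : Sym2 (Fin d → ℤ)} (he : e ∈ boxEdges d (k + 1))
    {v : Fin d → ℤ} (hv : v ∈ e) (hvk : ∀ i, |v i| < k) : e ∈ boxEdges d k := by
  refine ⟨he.1, fun x hx i => ?_⟩
  by_cases hxv : x = v
  · exact hxv ▸ (hvk i).le
  have hadj : (latticeGraph d).Adj v x := by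
    rw [← SimpleGraph.mem_edgeSet, ← (Sym2.mem_and_mem_iff (Ne.symm hxv)).mp ⟨hv, hx⟩]
    exact he.1
  have hvx := abs_le.mp (abs_sub_le_one_of_latticeGraph_adj hadj i)
  have hvi := abs_lt.mp (hvk i)
  exact abs_le.mpr ⟨by omega, by omega⟩

lemma forall_abs_le_of_srcAt_ne_zero {m : ℕ} {ω : boxEdges d m → ZMod 2} {v : Fin d → ℤ}
    (h : srcAt ω v ≠ 0) : ∀ i, |v i| ≤ m := by
  obtain ⟨e, -, hv⟩ := exists_mem_of_srcAt_ne_zero h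
  exact e.2.2 v hv

lemma forall_abs_update_le {u : Fin d → ℤ} {b : ℤ} (hu : ∀ x, |u x| ≤ b) {j : Fin d} {t : ℤ}
    (ht : |t| ≤ b) (x : Fin d) : |Function.update u j t x| ≤ b := by
  by_cases hx : x = j
  · subst hx; simpa using ht
  · simpa [Function.update_of_ne hx] using hu x

def annulus (d k : ℕ) : SimpleGraph (Fin d → ℤ) :=
  SimpleGraph.fromEdgeSet (boxEdges d (k + 1) \ boxEdges d k)

variable {k : ℕ}

lemma annulus_adj_update {u : Fin d → ℤ} {j : Fin d} {t : ℤ} (hu : ∀ x, |u x| ≤ k + 1)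
    (ht : |t| ≤ k + 1) (hstep : |u j - t| = 1)
    (hout : ∃ i, (k : ℤ) < |Function.update u j t i|) :
    (annulus d k).Adj u (Function.update u j t) := by
  have hadj := latticeGraph_adj_update hstep
  refine (SimpleGraph.fromEdgeSet_adj _).mpr ⟨⟨⟨hadj, fun v hv i => ?_⟩, fun he => ?_⟩, hadj.ne⟩
  · push_cast
    rcases Sym2.mem_iff.mp hv with rfl | rfl
    · exact hu i
    · exact forall_abs_update_le hu ht i
  · obtain ⟨i, hi⟩ := hout
    exact (he.2 _ (Sym2.mem_mk_right _ _) i).not_gt hi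

lemma annulus_reachable_update_of_face {u : Fin d → ℤ} {i j : Fin d} (hij : i ≠ j)
    (hu : ∀ x, |u x| ≤ k + 1) (hi : |u i| = k + 1) :
    (annulus d k).Reachable u (Function.update u j (k + 1)) := by
  have hj := abs_le.mp (hu j)
  have hraise : ∀ n : ℕ, u j + n ≤ k + 1 →
      (annulus d k).Reachable u (Function.update u j (u j + n)) := by
    intro n
    induction n with
    | zero => simp
    | succ n ih =>
      intro hn
      have hadj := annulus_adj_update (u := Function.update u j (u j + n)) (j := j)
        (t := u j + (n + 1))
        (forall_abs_update_le hu (abs_le.mpr ⟨by omega, by omega⟩))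
        (abs_le.mpr ⟨by omega, by omega⟩) (by simp)
        ⟨i, by simp [Function.update_of_ne hij, hi]⟩
      rw [Function.update_idem] at hadj
      exact (ih (by omega)).trans (by exact_mod_cast hadj.reachable)
  obtain ⟨n, hn⟩ : ∃ n : ℕ, u j + n = k + 1 := ⟨(k + 1 - u j).toNat, by omega⟩
  simpa [hn] using hraise n hn.le

lemma annulus_reachable_const_of_face {u : Fin d → ℤ} {j : Fin d} (hu : ∀ x, |u x| ≤ k + 1)
    (hj : u j = k + 1) : (annulus d k).Reachable u (fun _ => (k : ℤ) + 1) := by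
  classical
  have hk : |(k : ℤ) + 1| = k + 1 := abs_of_nonneg (by positivity)
  have hraise : ∀ s : Finset (Fin d),
      (annulus d k).Reachable u (fun x => if x ∈ s then (k : ℤ) + 1 else u x) := by
    intro s
    induction s using Finset.induction_on with
    | empty => simp
    | insert a s _ ih =>
      set w := fun x => if x ∈ s then (k : ℤ) + 1 else u x
      have hw : ∀ x, |w x| ≤ k + 1 := fun x => by
        by_cases hx : x ∈ s <;> simp [w, hx, hk.le, hu x]
      have hwj : w j = k + 1 := by by_cases hjs : j ∈ s <;> simp [w, hjs, hj]
      have hinsert : (fun x => if x ∈ insert a s then (k : ℤ) + 1 else u x) =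
          Function.update w a (k + 1) := by
        funext x
        by_cases hx : x = a <;> simp [w, hx]
      rw [hinsert]
      by_cases hja : j = a
      · rwa [← hja, Function.update_eq_self_iff.mpr hwj.symm]
      · exact ih.trans (annulus_reachable_update_of_face hja hw (hwj ▸ hk))
  simpa using hraise Finset.univ

lemma annulus_reachable_const_of_outer (hd : 2 ≤ d) {u : Fin d → ℤ}
    (hu : ∀ x, |u x| ≤ k + 1) (hi : ∃ i, |u i| = k + 1) :
    (annulus d k).Reachable u (fun _ => (k : ℤ) + 1) := by
  obtain ⟨i, hi⟩ := hi
  have : Nontrivial (Fin d) := Fin.nontrivial_iff_two_le.mpr hd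
  obtain ⟨j, hji⟩ := exists_ne i
  refine (annulus_reachable_update_of_face hji.symm hu hi).trans
    (annulus_reachable_const_of_face (j := j) (forall_abs_update_le hu ?_) (by simp))
  exact (abs_of_nonneg (by positivity)).le

lemma annulus_reachable_const_of_mem_boxBoundary (hd : 2 ≤ d) {u : Fin d → ℤ}
    (hu : u ∈ boxBoundary d k) : (annulus d k).Reachable u (fun _ => (k : ℤ) + 1) := by
  obtain ⟨hle, i, hi⟩ := hu
  obtain ⟨t, ht, hstep⟩ : ∃ t : ℤ, |t| = k + 1 ∧ |u i - t| = 1 := by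
    rcases (abs_eq (by positivity)).mp hi with h | h
    · exact ⟨k + 1, abs_of_nonneg (by positivity), by simp [h]⟩
    · exact ⟨-(k + 1), by rw [abs_neg]; exact abs_of_nonneg (by positivity), by simp [h]⟩
  have hu : ∀ x, |u x| ≤ k + 1 := fun x => (hle x).trans (by omega)
  have hti : |Function.update u i t i| = k + 1 := by simp [ht]
  exact (annulus_adj_update hu ht.le hstep ⟨i, by omega⟩).reachable.trans
    (annulus_reachable_const_of_outer hd (forall_abs_update_le hu ht.le) ⟨i, hti⟩)

end Lattice

section Box

variable {d k : ℕ}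

lemma coe_sourcesWithin_boxBoundary (m : ℕ) :
    (sourcesWithin (boxEdges d m) (boxBoundary d m) : Set _) = wiredEvens d m := by
  ext ω
  show (∀ v ∉ boxBoundary d m, srcAt ω v = 0) ↔ ∀ v, srcAt ω v = 1 → v ∈ boxBoundary d m
  refine forall_congr' fun v => ⟨fun h hv => ?_, fun h hv => ?_⟩
  · by_contra hvB
    exact one_ne_zero (hv ▸ h hvB)
  · by_contra hne
    exact hv (h (Fin.eq_one_of_ne_zero _ hne))

lemma setOf_isEvenConf_subset_wiredEvens (m : ℕ) :
    {ω : boxEdges d m → ZMod 2 | IsEvenConf ω} ⊆ wiredEvens d m :=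
  fun _ hω v hv => absurd (hω v ▸ hv) zero_ne_one

lemma restrictConf_image_wiredEvens_subset :
    restrictConf (boxEdges_mono d k) '' wiredEvens d (k + 1) ⊆ wiredEvens d k := by
  rintro _ ⟨ω, hω, rfl⟩ v hv
  have hle := forall_abs_le_of_srcAt_ne_zero (hv ▸ one_ne_zero)
  refine ⟨hle, ?_⟩
  by_contra! hlt
  have hvk : ∀ i, |v i| < k := fun i => (hle i).lt_of_ne (hlt i)
  rw [srcAt_restrictConf _ _ fun e _ hve => mem_boxEdges_of_mem_of_lt e.2 hve hvk] at hv
  obtain ⟨i, hi⟩ := (hω v hv).2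
  have := hvk i
  omega

lemma wiredEvens_subset_restrictConf_image (hd : 2 ≤ d) :
    wiredEvens d k ⊆ restrictConf (boxEdges_mono d k) '' {ω | IsEvenConf ω} := by
  intro ω' hω'
  obtain ⟨ω, hω, hres⟩ := exists_isEvenConf_restrictConf_eq
    (fun _ => not_isDiag_of_mem_boxEdges) (boxEdges_mono d k) (fun _ => (k : ℤ) + 1) ω'
    fun v hv => annulus_reachable_const_of_mem_boxBoundary hd (hω' v (Fin.eq_one_of_ne_zero _ hv))
  exact ⟨ω, hω, hres⟩

lemma restrictConf_image_setOf_isEvenConf (hd : 2 ≤ d) :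
    restrictConf (boxEdges_mono d k) '' {ω | IsEvenConf ω} = wiredEvens d k :=
  ((Set.image_mono (setOf_isEvenConf_subset_wiredEvens _)).trans
    restrictConf_image_wiredEvens_subset).antisymm (wiredEvens_subset_restrictConf_image hd)

lemma restrictConf_image_wiredEvens (hd : 2 ≤ d) :
    restrictConf (boxEdges_mono d k) '' wiredEvens d (k + 1) = wiredEvens d k :=
  restrictConf_image_wiredEvens_subset.antisymm ((wiredEvens_subset_restrictConf_image hd).trans
    (Set.image_mono (setOf_isEvenConf_subset_wiredEvens _)))

end Box

theorem marginal_of_ueg_on_box_general (d k : ℕ) (hd : 2 ≤ d) :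
    Measure.map (restrictConf (boxEdges_mono d k))
        (uniformOn {ω : boxEdges d (k + 1) → ZMod 2 | IsEvenConf ω})
      = Measure.map (restrictConf (boxEdges_mono d k)) (uniformOn (wiredEvens d (k + 1)))
    ∧ Measure.map (restrictConf (boxEdges_mono d k)) (uniformOn (wiredEvens d (k + 1)))
      = uniformOn (wiredEvens d k) := by
  have hmap (H : AddSubgroup (boxEdges d (k + 1) → ZMod 2)) :
      (uniformOn (H : Set _)).map (restrictConf (boxEdges_mono d k)) =
        uniformOn (restrictConf (boxEdges_mono d k) '' H) :=
    map_uniformOn_addSubgroup (restrictHom (boxEdges_mono d k)) H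
  rw [← coe_sourcesWithin_empty, ← coe_sourcesWithin_boxBoundary (k + 1), hmap, hmap,
    coe_sourcesWithin_empty, coe_sourcesWithin_boxBoundary,
    restrictConf_image_setOf_isEvenConf hd, restrictConf_image_wiredEvens hd]
  exact ⟨rfl, rfl⟩

theorem marginal_of_ueg_on_box (d k : ℕ) (hd : 2 ≤ d) (hk : 1 ≤ k) :
    Measure.map (restrictConf (boxEdges_mono d k))
        (uniformOn {ω : boxEdges d (k + 1) → ZMod 2 | IsEvenConf ω})
      = Measure.map (restrictConf (boxEdges_mono d k)) (uniformOn (wiredEvens d (k + 1)))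
    ∧ Measure.map (restrictConf (boxEdges_mono d k)) (uniformOn (wiredEvens d (k + 1)))
      = uniformOn (wiredEvens d k) :=
  marginal_of_ueg_on_box_general d k hd
end
end

section
/- Let V be a vertex set and E_1, E_2, E_3 pairwise disjoint sets of edges on V with E_1 and E_2 finite, and set G_2 = (V, E_1 ∪ E_2), G_3 = (V, E_1 ∪ E_2 ∪ E_3); assume G_3 is locally finite. Suppose the graph induced by E_2 (with vertex set the endpoints of edges of E_2) is connected, and its vertex set W is a separating surface between E_1 and E_3 in G_3: every path in G_3 from an endpoint of an edge of E_1 to an endpoint of an edge of E_3 visits a vertex of W. Then an element of (ZMod 2)^{E_1} is the restriction to E_1 of an even configuration of G_2 if and only if it is the restriction to E_1 of an even configuration of G_3; consequently the pushforwards of UEG_{G_2} and UEG_{G_3} under restriction to E_1 coincide. -/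
open MeasureTheory

noncomputable section

/-- The vertices that are endpoints of an edge of `E`. -/
def eVerts {V : Type*} (E : Set (Sym2 V)) : Set V := {v | ∃ e ∈ E, v ∈ e}

/-!
Let `σ` be the restriction to `E₁` of an even configuration on `G₃`. Off the surface
`W = eVerts E₂` a vertex meets either no edge of `E₁` or only edges of `E₁`, so the source `∂σ`
is supported on `W`; it has even total mass because every edge has two endpoints. As `W` is
connected through `E₂`, a sum of walks in `E₂` has boundary `∂σ`, and adding it to `σ` gives an
even configuration on `G₂` with the same restriction. Hence both graphs have the same set `R` of
even restrictions, a subgroup of the finite group `(ZMod 2)^E₁`. Translation invariance of the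
uniform even subgraph makes its marginal on `E₁` uniform on `R`, so the marginals agree.
-/

namespace EvenSubgraph

open scoped Classical ENNReal

variable {V : Type*}

def LocallyFiniteEdgeSet (E : Set (Sym2 V)) : Prop :=
  ∀ v : V, {e : Sym2 V | e ∈ E ∧ v ∈ e}.Finite

theorem LocallyFiniteEdgeSet.mono {E E' : Set (Sym2 V)} (h : E ⊆ E')
    (hE' : LocallyFiniteEdgeSet E') : LocallyFiniteEdgeSet E :=
  fun v => (hE' v).subset fun _ he => ⟨h he.1, he.2⟩

theorem _root_.Set.Finite.locallyFiniteEdgeSet {E : Set (Sym2 V)} (h : E.Finite) :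
    LocallyFiniteEdgeSet E :=
  fun _ => h.subset fun _ he => he.1

theorem LocallyFiniteEdgeSet.finite_incident {E : Set (Sym2 V)} (hE : LocallyFiniteEdgeSet E)
    (v : V) : {e : E | v ∈ (e : Sym2 V)}.Finite :=
  ((hE v).preimage Subtype.val_injective.injOn).subset fun e he => ⟨e.2, he⟩

theorem eVerts_finite {E : Set (Sym2 V)} (h : E.Finite) : (eVerts E).Finite := by
  refine (h.biUnion fun e _ => e.toFinset.finite_toSet).subset ?_
  rintro v ⟨e, he, hv⟩
  exact Set.mem_biUnion he (Sym2.mem_toFinset.2 hv)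

section Source

variable {E : Set (Sym2 V)}

theorem srcAt_eq_sum (hE : LocallyFiniteEdgeSet E) (ω : E → ZMod 2) (v : V) :
    srcAt ω v = ∑ e ∈ (hE.finite_incident v).toFinset, ω e := by
  have hω : ∀ e : E, ω e = if ω e = 1 then 1 else 0 := fun e => by
    generalize ω e = a; revert a; decide
  rw [Finset.sum_congr rfl fun e _ => hω e, Finset.sum_boole, srcAt, ← Set.ncard_coe_finset]
  congr 2
  ext e
  simp [and_comm]

theorem srcAt_eq_zero_of_forall (ω : E → ZMod 2) {v : V}
    (h : ∀ e : E, v ∈ (e : Sym2 V) → ω e = 0) : srcAt ω v = 0 := by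
  have : {e : E | ω e = 1 ∧ v ∈ (e : Sym2 V)} = ∅ :=
    Set.eq_empty_of_forall_notMem fun e he => by simp [h e he.2] at he
  simp [srcAt, this]

def boundary (hE : LocallyFiniteEdgeSet E) : (E → ZMod 2) →ₗ[ZMod 2] V → ZMod 2 where
  toFun ω v := srcAt ω v
  map_add' ω ω' := funext fun v => by
    simp only [srcAt_eq_sum hE, Pi.add_apply, Finset.sum_add_distrib]
  map_smul' c ω := funext fun v => by
    simp only [srcAt_eq_sum hE, Pi.smul_apply, smul_eq_mul, Finset.mul_sum, RingHom.id_apply]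

theorem boundary_apply (hE : LocallyFiniteEdgeSet E) (ω : E → ZMod 2) (v : V) :
    boundary hE ω v = srcAt ω v := rfl

theorem isEvenConf_iff_boundary_eq_zero (hE : LocallyFiniteEdgeSet E) (ω : E → ZMod 2) :
    IsEvenConf ω ↔ boundary hE ω = 0 :=
  funext_iff.symm

theorem continuous_boundary (hE : LocallyFiniteEdgeSet E) : Continuous (boundary hE) :=
  continuous_pi fun v => by
    simp only [boundary_apply, srcAt_eq_sum hE]
    exact continuous_finsetSum _ fun e _ => continuous_apply e

theorem boundary_single (hE : LocallyFiniteEdgeSet E) (e : E) :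
    boundary hE (Pi.single e 1) = fun v => if v ∈ (e : Sym2 V) then 1 else 0 := by
  funext v
  simp [boundary_apply, srcAt_eq_sum hE, Finset.sum_pi_single']

theorem boundary_single_mk (hE : LocallyFiniteEdgeSet E) {a b : V} (hab : a ≠ b)
    (h : s(a, b) ∈ E) :
    boundary hE (Pi.single ⟨s(a, b), h⟩ 1) = Pi.single a 1 + Pi.single b 1 := by
  rw [boundary_single]
  funext v
  by_cases hva : v = a <;> by_cases hvb : v = b <;> simp_all

theorem srcAt_restrictConf {E' : Set (Sym2 V)} (h : E ⊆ E') (ω : E' → ZMod 2) {v : V}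
    (hv : ∀ e : E', ω e = 1 → v ∈ (e : Sym2 V) → (e : Sym2 V) ∈ E) :
    srcAt (restrictConf h ω) v = srcAt ω v := by
  have : {e : E' | ω e = 1 ∧ v ∈ (e : Sym2 V)} =
      Set.inclusion h '' {e : E | restrictConf h ω e = 1 ∧ v ∈ (e : Sym2 V)} := by
    ext e
    refine ⟨fun he => ⟨⟨e, hv e he.1 he.2⟩, he, rfl⟩, ?_⟩
    rintro ⟨e, he, rfl⟩
    exact he
  rw [srcAt, srcAt, this, Set.ncard_image_of_injective _ (Set.inclusion_injective h)]

end Source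

section Extension

variable {E E' : Set (Sym2 V)}

theorem restrictConf_add (h : E ⊆ E') (ω ω' : E' → ZMod 2) :
    restrictConf h (ω + ω') = restrictConf h ω + restrictConf h ω' := rfl

theorem restrictConf_extend (h : E ⊆ E') (ω : E → ZMod 2) :
    restrictConf h (Function.extend (Set.inclusion h) ω 0) = ω :=
  funext fun e => (Set.inclusion_injective h).extend_apply ω 0 e

theorem srcAt_extend (h : E ⊆ E') (ω : E → ZMod 2) (v : V) :
    srcAt (Function.extend (Set.inclusion h) ω 0) v = srcAt ω v := by
  conv_rhs => rw [← restrictConf_extend h ω]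
  refine (srcAt_restrictConf h _ fun e he _ => ?_).symm
  by_contra hne
  rw [Function.extend_apply' _ _ _ fun ⟨a, ha⟩ => hne (ha ▸ a.2)] at he
  exact zero_ne_one he

theorem isEvenConf_extend (h : E ⊆ E') {ω : E → ZMod 2} (hω : IsEvenConf ω) :
    IsEvenConf (Function.extend (Set.inclusion h) ω 0) :=
  fun v => (srcAt_extend h ω v).trans (hω v)

end Extension

section Walk

variable {E : Set (Sym2 V)} {G : SimpleGraph V}

def walkParity (E : Set (Sym2 V)) {x y : V} (p : G.Walk x y) : E → ZMod 2 :=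
  fun e => (p.edges.count (e : Sym2 V) : ZMod 2)

theorem mem_edgeSet_of_walkParity_ne_zero {x y : V} (p : G.Walk x y) {e : E}
    (he : walkParity E p e ≠ 0) : (e : Sym2 V) ∈ G.edgeSet := by
  refine p.edges_subset_edgeSet (List.count_pos_iff.1 (Nat.pos_of_ne_zero fun h0 => he ?_))
  simp [walkParity, h0]

theorem boundary_walkParity (hE : LocallyFiniteEdgeSet E) (hG : G.edgeSet ⊆ E) {x y : V}
    (p : G.Walk x y) : boundary hE (walkParity E p) = Pi.single x 1 + Pi.single y 1 := by
  induction p with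
  | nil =>
    rw [ZModModule.add_self]
    exact map_zero _
  | @cons a b c hadj p ih =>
    have hcons : walkParity E (.cons hadj p) =
        Pi.single ⟨s(a, b), hG hadj⟩ 1 + walkParity E p := by
      funext e
      simp only [walkParity, SimpleGraph.Walk.edges_cons, List.count_cons, Pi.add_apply,
        Pi.single_apply, Subtype.ext_iff, beq_iff_eq]
      split_ifs <;> simp_all [eq_comm, add_comm]
    rw [hcons, map_add, ih, boundary_single_mk hE hadj.ne, add_assoc,
      ← add_assoc (Pi.single b 1), ZModModule.add_self, zero_add]

end Walk

/-- Join a base point `w` to every `v ∈ W` and add up the walks weighted by `δ v`: the base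
point collects `∑ δ = 0`, every other vertex `v` receives `δ v`. -/
theorem exists_boundary_eq {E : Set (Sym2 V)} {G : SimpleGraph V} (hE : LocallyFiniteEdgeSet E)
    (hG : G.edgeSet ⊆ E) {W : Finset V} (hW : ∀ x ∈ W, ∀ y ∈ W, G.Reachable x y)
    {δ : V → ZMod 2} (hδ : ∀ v ∉ W, δ v = 0) (hsum : ∑ v ∈ W, δ v = 0) :
    ∃ γ : E → ZMod 2, (∀ e, γ e ≠ 0 → (e : Sym2 V) ∈ G.edgeSet) ∧ boundary hE γ = δ := by
  rcases W.eq_empty_or_nonempty with rfl | ⟨w, hw⟩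
  · exact ⟨0, fun e he => absurd rfl he, by funext v; simp [hδ v (Finset.notMem_empty v)]⟩
  let γ : E → ZMod 2 := ∑ v : W, δ v • walkParity E (hW w hw v v.2).some
  refine ⟨γ, fun e he => ?_, ?_⟩
  · obtain ⟨v, -, hv⟩ := Finset.exists_ne_zero_of_sum_ne_zero (by simpa [γ] using he)
    exact mem_edgeSet_of_walkParity_ne_zero _ (right_ne_zero_of_mul hv)
  · funext u
    simp only [γ, map_sum, map_smul, boundary_walkParity hE hG, Finset.sum_apply, Pi.smul_apply,
      Pi.add_apply, smul_eq_mul, mul_add, Finset.sum_add_distrib, ← Finset.sum_mul,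
      Finset.sum_coe_sort W δ, hsum, zero_mul, zero_add]
    rw [Finset.sum_coe_sort W fun v => δ v * (Pi.single v 1 : V → ZMod 2) u]
    by_cases hu : u ∈ W <;> simp [Pi.single_apply, hu, hδ]

theorem sum_srcAt_eq_zero {E : Set (Sym2 V)} (hE : E.Finite) (hloop : ∀ e ∈ E, ¬e.IsDiag)
    (ω : E → ZMod 2) {S : Finset V} (hS : eVerts E ⊆ S) : ∑ v ∈ S, srcAt ω v = 0 := by
  have := hE.fintype
  have hsrc : ∀ v, srcAt ω v = ∑ e : E, if v ∈ (e : Sym2 V) then ω e else 0 := fun v => by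
    rw [srcAt_eq_sum hE.locallyFiniteEdgeSet, ← Finset.sum_filter]
    congr 1
    ext e
    simp
  simp only [hsrc]
  rw [Finset.sum_comm]
  refine Finset.sum_eq_zero fun e _ => ?_
  have hfilter : S.filter (· ∈ (e : Sym2 V)) = (e : Sym2 V).toFinset := by
    ext v
    simpa using fun hv => hS ⟨e, e.2, hv⟩
  rw [← Finset.sum_filter, Finset.sum_const, hfilter,
    Sym2.card_toFinset_of_not_isDiag _ (hloop e e.2)]
  generalize ω e = a
  revert a
  decide

def evenRestrictions {E₁ E : Set (Sym2 V)} (h : E₁ ⊆ E) : Set (E₁ → ZMod 2) :=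
  restrictConf h '' {η | IsEvenConf η}

theorem evenRestrictions_subset_trans {E₁ E E' : Set (Sym2 V)} (h₁ : E₁ ⊆ E) (h : E ⊆ E') :
    evenRestrictions h₁ ⊆ evenRestrictions (h₁.trans h) := by
  rintro _ ⟨η, hη, rfl⟩
  exact ⟨_, isEvenConf_extend h hη, congrArg (restrictConf h₁) (restrictConf_extend h η)⟩

section Separating

variable {E₁ E₂ E₃ : Set (Sym2 V)}

theorem srcAt_restrictConf_eq_zero (hsep : eVerts E₁ ∩ eVerts E₃ ⊆ eVerts E₂)
    {η : ↥(E₁ ∪ E₂ ∪ E₃) → ZMod 2} (hη : IsEvenConf η) {v : V} (hv : v ∉ eVerts E₂) :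
    srcAt (restrictConf (Set.subset_union_left.trans Set.subset_union_left) η) v = 0 := by
  by_cases hv₁ : v ∈ eVerts E₁
  · have hv₃ : v ∉ eVerts E₃ := fun hv₃ => hv (hsep ⟨hv₁, hv₃⟩)
    refine (srcAt_restrictConf _ η fun e _ hve => ?_).trans (hη v)
    rcases e.2 with (he | he) | he
    · exact he
    · exact absurd ⟨e, he, hve⟩ hv
    · exact absurd ⟨e, he, hve⟩ hv₃
  · exact srcAt_eq_zero_of_forall _ fun e hve => absurd ⟨e, e.2, hve⟩ hv₁

theorem evenRestrictions_subset_of_separating (hd₁₂ : Disjoint E₁ E₂) (hfin₁ : E₁.Finite)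
    (hfin₂ : E₂.Finite) (hloop : ∀ e ∈ E₁, ¬e.IsDiag)
    (hconn : ∀ x ∈ eVerts E₂, ∀ y ∈ eVerts E₂, (SimpleGraph.fromEdgeSet E₂).Reachable x y)
    (hsep : eVerts E₁ ∩ eVerts E₃ ⊆ eVerts E₂) :
    evenRestrictions (Set.subset_union_left.trans Set.subset_union_left :
        E₁ ⊆ E₁ ∪ E₂ ∪ E₃) ⊆
      evenRestrictions (Set.subset_union_left : E₁ ⊆ E₁ ∪ E₂) := by
  rintro _ ⟨η, hη, rfl⟩
  set σ := restrictConf (Set.subset_union_left.trans Set.subset_union_left) η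
  have hE₁₂ := (hfin₁.union hfin₂).locallyFiniteEdgeSet
  let W := (eVerts_finite hfin₂).toFinset
  let δ := boundary hfin₁.locallyFiniteEdgeSet σ
  have hδ : ∀ v ∉ W, δ v = 0 := fun v hv =>
    srcAt_restrictConf_eq_zero hsep hη (by simpa [W] using hv)
  have hsum : ∑ v ∈ W, δ v = 0 := by
    rw [Finset.sum_subset (Finset.subset_union_left (s₂ := (eVerts_finite hfin₁).toFinset))
      fun v _ hv => hδ v hv]
    exact sum_srcAt_eq_zero hfin₁ hloop σ fun v hv => by simp [hv]
  have hG : (SimpleGraph.fromEdgeSet E₂).edgeSet ⊆ E₁ ∪ E₂ := by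
    rw [SimpleGraph.edgeSet_fromEdgeSet]
    exact Set.sdiff_subset.trans Set.subset_union_right
  obtain ⟨γ, hγE₂, hγ⟩ := exists_boundary_eq hE₁₂ hG
    (fun x hx y hy => hconn x (by simpa [W] using hx) y (by simpa [W] using hy)) hδ hsum
  have hγE₁ : restrictConf Set.subset_union_left γ = 0 := funext fun e => by
    by_contra hne
    have := hγE₂ _ hne
    rw [SimpleGraph.edgeSet_fromEdgeSet] at this
    exact Set.disjoint_left.1 hd₁₂ e.2 this.1
  refine ⟨Function.extend (Set.inclusion Set.subset_union_left) σ 0 + γ, ?_, ?_⟩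
  · show IsEvenConf _
    rw [isEvenConf_iff_boundary_eq_zero hE₁₂, map_add, hγ]
    convert ZModModule.add_self δ
    funext v
    exact srcAt_extend _ σ v
  · rw [restrictConf_add, restrictConf_extend, hγE₁, add_zero]

end Separating

theorem add_mem_evenRestrictions {E₁ E : Set (Sym2 V)} (h : E₁ ⊆ E)
    (hE : LocallyFiniteEdgeSet E) {σ τ : E₁ → ZMod 2} (hσ : σ ∈ evenRestrictions h)
    (hτ : τ ∈ evenRestrictions h) : σ + τ ∈ evenRestrictions h := by
  obtain ⟨η, hη : IsEvenConf η, rfl⟩ := hσ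
  obtain ⟨η', hη' : IsEvenConf η', rfl⟩ := hτ
  refine ⟨η + η', ?_, rfl⟩
  show IsEvenConf _
  rw [isEvenConf_iff_boundary_eq_zero hE] at hη hη' ⊢
  rw [map_add, hη, hη', add_zero]

section Measure

theorem exists_isProbabilityMeasure_range_map_add_eq_self {G A : Type*} [AddCommGroup G]
    [TopologicalSpace G] [IsTopologicalAddGroup G] [CompactSpace G] [MeasurableSpace G]
    [BorelSpace G] [AddCommGroup A] [MeasurableSpace A] [MeasurableAdd A] (f : G →+ A)
    (hf : Measurable f) :
    ∃ μ : Measure A, IsProbabilityMeasure μ ∧ μ (Set.range f) = 1 ∧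
      ∀ g, Measure.map (· + f g) μ = μ := by
  let ν := Measure.addHaarMeasure (G := G) ⟨⟨Set.univ, isCompact_univ⟩, by simp⟩
  have hν : ν Set.univ = 1 := Measure.addHaarMeasure_self
  have : IsProbabilityMeasure (ν.map f) := ⟨by rwa [Measure.map_apply hf .univ]⟩
  refine ⟨ν.map f, this, le_antisymm prob_le_one ?_, fun g => ?_⟩
  · simpa [hν] using Measure.le_map_apply (μ := ν) hf.aemeasurable (Set.range f)
  · rw [Measure.map_map (measurable_add_const _) hf]
    conv_rhs => rw [← map_add_right_eq_self ν g]
    rw [Measure.map_map hf (measurable_add_const g)]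
    congr 1
    funext x
    simp

theorem exists_isUEG {E : Set (Sym2 V)} (hE : LocallyFiniteEdgeSet E) : ∃ μ, IsUEG E μ := by
  let S := (LinearMap.ker (boundary hE)).toAddSubgroup
  have hS : (S : Set (E → ZMod 2)) = {ω | IsEvenConf ω} := by
    ext ω
    exact (isEvenConf_iff_boundary_eq_zero hE ω).symm
  let _ : MeasurableSpace S := borel S
  have : BorelSpace S := ⟨rfl⟩
  have : CompactSpace S := isCompact_iff_compactSpace.1
    ((isClosed_singleton.preimage (continuous_boundary hE)).isCompact)
  have hmeas : Measurable S.subtype := measurable_pi_iff.2 fun e =>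
    ((continuous_apply e).comp continuous_subtype_val).measurable
  obtain ⟨μ, hμ, hrange, hinv⟩ := exists_isProbabilityMeasure_range_map_add_eq_self _ hmeas
  rw [AddSubgroup.coe_subtype, Subtype.range_coe, hS] at hrange
  exact ⟨μ, hμ, hrange, fun γ hγ => hinv ⟨γ, (Set.ext_iff.1 hS γ).2 hγ⟩⟩

theorem measure_singleton_eq_inv_ncard {α : Type*} [MeasurableSpace α]
    [MeasurableSingletonClass α] {μ : Measure α} {R : Set α} (hR : R.Finite) (hμR : μ R = 1)
    (hconst : ∀ x ∈ R, ∀ y ∈ R, μ {x} = μ {y}) {x : α} (hx : x ∈ R) :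
    μ {x} = (R.ncard : ℝ≥0∞)⁻¹ := by
  refine ENNReal.eq_inv_of_mul_eq_one_left ?_
  have hsum : μ R = ∑ y ∈ hR.toFinset, μ {y} := by rw [sum_measure_singleton, hR.coe_toFinset]
  rw [← hμR, hsum, Finset.sum_congr rfl fun y hy => hconst y (hR.mem_toFinset.1 hy) x hx,
    Finset.sum_const, nsmul_eq_mul, Set.ncard_eq_toFinset_card R hR, mul_comm]

variable {E₁ E : Set (Sym2 V)} (h : E₁ ⊆ E) {μ : Measure (E → ZMod 2)}

theorem measurable_restrictConf : Measurable (restrictConf h) :=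
  measurable_pi_lambda _ fun _ => measurable_pi_apply _

theorem map_restrictConf_evenRestrictions (hμ : IsUEG E μ) :
    μ.map (restrictConf h) (evenRestrictions h) = 1 := by
  have := hμ.1
  have := Measure.isProbabilityMeasure_map (μ := μ) (measurable_restrictConf h).aemeasurable
  refine le_antisymm prob_le_one ?_
  calc 1 = μ {η | IsEvenConf η} := hμ.2.1.symm
    _ ≤ μ (restrictConf h ⁻¹' evenRestrictions h) := measure_mono fun η hη => ⟨η, hη, rfl⟩
    _ ≤ _ := Measure.le_map_apply (measurable_restrictConf h).aemeasurable _

theorem map_restrictConf_singleton_add [Finite E₁] (hμ : IsUEG E μ) {τ : E₁ → ZMod 2}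
    (hτ : τ ∈ evenRestrictions h) (σ : E₁ → ZMod 2) :
    μ.map (restrictConf h) {σ + τ} = μ.map (restrictConf h) {σ} := by
  obtain ⟨γ, hγ, rfl⟩ := hτ
  have hshift : μ.map (restrictConf h) =
      (μ.map (restrictConf h)).map (· + restrictConf h γ) := by
    rw [Measure.map_map (measurable_add_const _) (measurable_restrictConf h)]
    conv_lhs => rw [← hμ.2.2 γ hγ]
    rw [Measure.map_map (measurable_restrictConf h) (measurable_add_const _)]
    rfl
  conv_lhs => rw [hshift]
  rw [Measure.map_apply (measurable_add_const _) (measurableSet_singleton _),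
    Set.preimage_add_right_singleton, add_neg_cancel_right]

theorem map_restrictConf_singleton [Finite E₁] (hE : LocallyFiniteEdgeSet E) (hμ : IsUEG E μ)
    (σ : E₁ → ZMod 2) :
    μ.map (restrictConf h) {σ} =
      (evenRestrictions h).indicator (fun _ => ((evenRestrictions h).ncard : ℝ≥0∞)⁻¹) σ := by
  have hR := map_restrictConf_evenRestrictions h hμ
  by_cases hσ : σ ∈ evenRestrictions h
  · rw [Set.indicator_of_mem hσ]
    refine measure_singleton_eq_inv_ncard (Set.toFinite _) hR (fun x hx y hy => ?_) hσ
    rw [← map_restrictConf_singleton_add h hμ (add_mem_evenRestrictions h hE hy hx) y,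
      ← add_assoc, ZModModule.add_self, zero_add]
  · have := hμ.1
    have := Measure.isProbabilityMeasure_map (μ := μ) (measurable_restrictConf h).aemeasurable
    rw [Set.indicator_of_notMem hσ]
    exact measure_mono_null (Set.singleton_subset_iff.2 hσ)
      ((prob_compl_eq_zero_iff (Set.toFinite _).measurableSet).2 hR)

theorem map_restrictConf_eq_of_evenRestrictions_eq [Finite E₁] {E' : Set (Sym2 V)}
    {h' : E₁ ⊆ E'} (hE : LocallyFiniteEdgeSet E) (hE' : LocallyFiniteEdgeSet E')
    {μ' : Measure (E' → ZMod 2)} (hμ : IsUEG E μ) (hμ' : IsUEG E' μ')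
    (hR : evenRestrictions h = evenRestrictions h') :
    μ.map (restrictConf h) = μ'.map (restrictConf h') :=
  Measure.ext_iff_singleton.2 fun σ => by
    rw [map_restrictConf_singleton h hE hμ, map_restrictConf_singleton h' hE' hμ', hR]

end Measure

end EvenSubgraph

open EvenSubgraph

theorem ueg_marginal_separating_surface_general {V : Type}
    (E1 E2 E3 : Set (Sym2 V))
    (hd12 : Disjoint E1 E2)
    (h1fin : E1.Finite) (h2fin : E2.Finite)
    (hsimple : ∀ e ∈ E1 ∪ E2 ∪ E3, ¬ e.IsDiag)
    (hlf : ∀ v : V, {e : Sym2 V | e ∈ E1 ∪ E2 ∪ E3 ∧ v ∈ e}.Finite)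
    (hWconn : ∀ x ∈ eVerts E2, ∀ y ∈ eVerts E2,
      (SimpleGraph.fromEdgeSet E2).Reachable x y)
    (hsep : ∀ x y : V, x ∈ eVerts E1 → y ∈ eVerts E3 →
      ∀ p : (SimpleGraph.fromEdgeSet (E1 ∪ E2 ∪ E3)).Walk x y,
        ∃ w ∈ eVerts E2, w ∈ p.support) :
    (∀ σ : E1 → ZMod 2,
      (∃ η : ↥(E1 ∪ E2) → ZMod 2, IsEvenConf η ∧
        restrictConf (Set.subset_union_left : E1 ⊆ E1 ∪ E2) η = σ) ↔
      (∃ η : ↥(E1 ∪ E2 ∪ E3) → ZMod 2, IsEvenConf η ∧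
        restrictConf (Set.subset_union_left.trans Set.subset_union_left :
          E1 ⊆ E1 ∪ E2 ∪ E3) η = σ)) ∧
    (∃ μ, IsUEG (E1 ∪ E2) μ) ∧ (∃ μ, IsUEG (E1 ∪ E2 ∪ E3) μ) ∧
    (∀ μ₂ μ₃, IsUEG (E1 ∪ E2) μ₂ → IsUEG (E1 ∪ E2 ∪ E3) μ₃ →
      Measure.map (restrictConf (Set.subset_union_left : E1 ⊆ E1 ∪ E2)) μ₂
        = Measure.map (restrictConf (Set.subset_union_left.trans Set.subset_union_left :
            E1 ⊆ E1 ∪ E2 ∪ E3)) μ₃) := by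
  have hsep' : eVerts E1 ∩ eVerts E3 ⊆ eVerts E2 := fun v ⟨hv1, hv3⟩ => by
    obtain ⟨w, hw, hwv⟩ := hsep v v hv1 hv3 .nil
    rw [SimpleGraph.Walk.support_nil, List.mem_singleton] at hwv
    exact hwv ▸ hw
  have hR : evenRestrictions (Set.subset_union_left : E1 ⊆ E1 ∪ E2) =
      evenRestrictions (Set.subset_union_left.trans Set.subset_union_left) :=
    (evenRestrictions_subset_trans _ Set.subset_union_left).antisymm <|
      evenRestrictions_subset_of_separating hd12 h1fin h2fin
        (fun e he => hsimple e (.inl (.inl he))) hWconn hsep'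
  have hE : LocallyFiniteEdgeSet (E1 ∪ E2 ∪ E3) := hlf
  have hE12 := hE.mono (Set.subset_union_left : E1 ∪ E2 ⊆ E1 ∪ E2 ∪ E3)
  have := h1fin.to_subtype
  exact ⟨fun σ => Set.ext_iff.1 hR σ, exists_isUEG hE12, exists_isUEG hE,
    fun μ₂ μ₃ h₂ h₃ => map_restrictConf_eq_of_evenRestrictions_eq _ hE12 hE h₂ h₃ hR⟩

theorem ueg_marginal_separating_surface {V : Type}
    (E1 E2 E3 : Set (Sym2 V))
    (hd12 : Disjoint E1 E2) (hd13 : Disjoint E1 E3) (hd23 : Disjoint E2 E3)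
    (h1fin : E1.Finite) (h2fin : E2.Finite)
    (hsimple : ∀ e ∈ E1 ∪ E2 ∪ E3, ¬ e.IsDiag)
    (hlf : ∀ v : V, {e : Sym2 V | e ∈ E1 ∪ E2 ∪ E3 ∧ v ∈ e}.Finite)
    (hWne : (eVerts E2).Nonempty)
    (hWconn : ∀ x ∈ eVerts E2, ∀ y ∈ eVerts E2,
      (SimpleGraph.fromEdgeSet E2).Reachable x y)
    (hsep : ∀ x y : V, x ∈ eVerts E1 → y ∈ eVerts E3 →
      ∀ p : (SimpleGraph.fromEdgeSet (E1 ∪ E2 ∪ E3)).Walk x y,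
        ∃ w ∈ eVerts E2, w ∈ p.support) :
    (∀ σ : E1 → ZMod 2,
      (∃ η : ↥(E1 ∪ E2) → ZMod 2, IsEvenConf η ∧
        restrictConf (Set.subset_union_left : E1 ⊆ E1 ∪ E2) η = σ) ↔
      (∃ η : ↥(E1 ∪ E2 ∪ E3) → ZMod 2, IsEvenConf η ∧
        restrictConf (Set.subset_union_left.trans Set.subset_union_left :
          E1 ⊆ E1 ∪ E2 ∪ E3) η = σ)) ∧
    (∃ μ, IsUEG (E1 ∪ E2) μ) ∧ (∃ μ, IsUEG (E1 ∪ E2 ∪ E3) μ) ∧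
    (∀ μ₂ μ₃, IsUEG (E1 ∪ E2) μ₂ → IsUEG (E1 ∪ E2 ∪ E3) μ₃ →
      Measure.map (restrictConf (Set.subset_union_left : E1 ⊆ E1 ∪ E2)) μ₂
        = Measure.map (restrictConf (Set.subset_union_left.trans Set.subset_union_left :
            E1 ⊆ E1 ∪ E2 ∪ E3)) μ₃) :=
  ueg_marginal_separating_surface_general E1 E2 E3 hd12 h1fin h2fin hsimple hlf hWconn hsep
end
end

section
/- Let E_1, E_2, E_3 be pairwise disjoint sets of edges on a vertex set V with E_1 and E_2 finite, let G_3 = (V, E_1 ∪ E_2 ∪ E_3) be locally finite, suppose the graph induced by E_2 is connected, and suppose its vertex set W is a separating surface between E_1 and E_3 in G_3 (every path in G_3 from an endpoint of an edge of E_1 to an endpoint of an edge of E_3 visits a vertex of W). If η is a random even configuration distributed according to UEG_{G_3}, then the random variables η|_{E_1} and η|_{E_3} are independent. -/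
/-! The even configurations form the kernel of the source map, a closed subgroup of the compact
group `(ZMod 2)^E`, and `UEG` is the pushforward of its Haar measure. For independence it suffices
that every even configuration `δ` can be glued to one agreeing with `δ` on `E1` and vanishing on
`E3`: translations by such configurations preserve `UEG` and all events on `E3`, and move any
achievable value on `E1` to `0`, so the law of `η|E1` is uniform on its range, also conditionally
on any event on `E3`. For the gluing, the part of `δ` on `E1` has its sources on the separating
surface; their number is even (handshake), so they are cancelled by a sum of paths inside the
connected graph `E2`. -/

open MeasureTheory

noncomputable section

section

open Finset

variable {V : Type*}

def LocallyFiniteEdgeSet (E : Set (Sym2 V)) : Prop :=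
  ∀ v : V, {e : Sym2 V | e ∈ E ∧ v ∈ e}.Finite

section SourceMap

variable {E : Set (Sym2 V)} (hE : LocallyFiniteEdgeSet E)

def incidentEdges (v : V) : Finset E :=
  ((hE v).preimage Subtype.val_injective.injOn).toFinset

variable {hE} in
@[simp]
theorem mem_incidentEdges {v : V} {e : E} : e ∈ incidentEdges hE v ↔ v ∈ (e : Sym2 V) := by
  simp [incidentEdges]

/-- `srcAt` written as a finite sum (`sourceMap_apply`), which makes it `ZMod 2`-linear. -/
def sourceMap : (E → ZMod 2) →ₗ[ZMod 2] V → ZMod 2 where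
  toFun ω v := ∑ e ∈ incidentEdges hE v, ω e
  map_add' ω γ := by ext v; simp [sum_add_distrib]
  map_smul' c ω := by ext v; simp [mul_sum]

theorem sourceMap_apply (ω : E → ZMod 2) (v : V) : sourceMap hE ω v = srcAt ω v := by
  classical
  have hbool : ∀ x : ZMod 2, x = if x = 1 then 1 else 0 := by decide
  change ∑ e ∈ incidentEdges hE v, ω e = _
  rw [sum_congr rfl fun e _ => hbool (ω e), sum_boole, srcAt, ← Set.ncard_coe_finset]
  congr 2
  ext e
  simp [and_comm]

theorem isEvenConf_iff_sourceMap_eq_zero {ω : E → ZMod 2} :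
    IsEvenConf ω ↔ sourceMap hE ω = 0 := by
  simp [IsEvenConf, funext_iff, sourceMap_apply]

theorem continuous_sourceMap : Continuous (sourceMap hE) :=
  continuous_pi fun _ => continuous_finsetSum _ fun e _ => continuous_apply e

theorem exists_apply_ne_zero_of_sourceMap_ne_zero {ω : E → ZMod 2} {v : V}
    (h : sourceMap hE ω v ≠ 0) : ∃ e : E, v ∈ (e : Sym2 V) ∧ ω e ≠ 0 := by
  obtain ⟨e, he, hωe⟩ := exists_ne_zero_of_sum_ne_zero h
  exact ⟨e, mem_incidentEdges.mp he, hωe⟩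

theorem sourceMap_single [DecidableEq V] {e : E} {a b : V} (he : (e : Sym2 V) = s(a, b))
    (hab : a ≠ b) :
    sourceMap hE (Pi.single e 1) = Pi.single a 1 + Pi.single b 1 := by
  ext u
  change ∑ e' ∈ incidentEdges hE u, Pi.single e (1 : ZMod 2) e' = _
  rw [sum_pi_single']
  simp only [mem_incidentEdges, he, Sym2.mem_iff, Pi.add_apply, Pi.single_apply]
  by_cases hua : u = a <;> by_cases hub : u = b <;> simp_all

/-- Handshake lemma: each open edge is counted at both of its two distinct endpoints. -/
theorem sum_sourceMap_eq_zero {ω : E → ZMod 2}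
    (hloop : ∀ e : E, ω e ≠ 0 → ¬(e : Sym2 V).IsDiag) (T : Finset V)
    (hT : ∀ e : E, ω e ≠ 0 → ∀ v ∈ (e : Sym2 V), v ∈ T) :
    ∑ v ∈ T, sourceMap hE ω v = 0 := by
  classical
  change ∑ v ∈ T, ∑ e ∈ incidentEdges hE v, ω e = 0
  rw [sum_comm' (t' := T.biUnion (incidentEdges hE)) (s' := fun e => T.filter (· ∈ (e : Sym2 V)))
    (by
      simp only [mem_filter, mem_biUnion, mem_incidentEdges]
      exact fun v e => ⟨fun h => ⟨h, v, h⟩, fun h => h.1⟩)]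
  refine sum_eq_zero fun e _ => ?_
  by_cases hωe : ω e = 0
  · simp [hωe]
  have hends : T.filter (· ∈ (e : Sym2 V)) = (e : Sym2 V).toFinset := by
    ext v; simpa [Sym2.mem_toFinset] using hT e hωe v
  rw [sum_const, hends, Sym2.card_toFinset_of_not_isDiag _ (hloop e hωe), two_nsmul,
    CharTwo.add_self_eq_zero]

end SourceMap

open scoped ENNReal in
theorem exists_isProbabilityMeasure_map_add_eq_self_of_isClosed {X : Type*} [AddCommGroup X]
    [TopologicalSpace X] [IsTopologicalAddGroup X] [CompactSpace X] [MeasurableSpace X]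
    [MeasurableAdd X] (hX : ‹MeasurableSpace X› ≤ borel X) {H : AddSubgroup X}
    (hH : IsClosed (H : Set X)) :
    ∃ μ : Measure X, IsProbabilityMeasure μ ∧ μ H = 1 ∧ ∀ γ ∈ H, μ.map (· + γ) = μ := by
  have : CompactSpace H := isCompact_iff_compactSpace.mp hH.isCompact
  borelize ↥H
  let ν := Measure.addHaarMeasure (⊤ : TopologicalSpace.PositiveCompacts H)
  have : IsProbabilityMeasure ν := ⟨Measure.addHaarMeasure_self⟩
  have hval : Measurable (Subtype.val : H → X) :=
    continuous_subtype_val.borel_measurable.mono le_rfl hX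
  refine ⟨ν.map Subtype.val, Measure.isProbabilityMeasure_map hval.aemeasurable, ?_,
    fun γ hγ => ?_⟩
  · refine le_antisymm prob_le_one ?_
    calc (1 : ℝ≥0∞) = ν (Subtype.val ⁻¹' (H : Set X)) := by
          rw [Subtype.coe_preimage_self, measure_univ]
      _ ≤ ν.map Subtype.val H := Measure.le_map_apply hval.aemeasurable _
  · rw [Measure.map_map (measurable_add_const γ) hval]
    change ν.map (Subtype.val ∘ (· + ⟨γ, hγ⟩)) = _
    rw [← Measure.map_map hval (continuous_add_const _).measurable, map_add_right_eq_self]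

theorem exists_isUEG {E : Set (Sym2 V)} (hE : LocallyFiniteEdgeSet E) : ∃ μ, IsUEG E μ := by
  have hker : {ω | IsEvenConf ω} =
      ((LinearMap.ker (sourceMap hE)).toAddSubgroup : Set (E → ZMod 2)) :=
    Set.ext fun _ => isEvenConf_iff_sourceMap_eq_zero hE
  obtain ⟨μ, hprob, hμ, hinv⟩ := exists_isProbabilityMeasure_map_add_eq_self_of_isClosed
    pi_le_borel_pi (H := (LinearMap.ker (sourceMap hE)).toAddSubgroup)
    (isClosed_singleton.preimage (continuous_sourceMap hE))
  exact ⟨μ, hprob, hker ▸ hμ, fun γ hγ => hinv γ ((isEvenConf_iff_sourceMap_eq_zero hE).mp hγ)⟩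

section Correction

variable {E : Set (Sym2 V)} (hE : LocallyFiniteEdgeSet E) {H : SimpleGraph V}

theorem exists_sourceMap_eq_single_add_single [DecidableEq V] (hHE : H.edgeSet ⊆ E) {x y : V}
    (h : H.Reachable x y) :
    ∃ τ : E → ZMod 2, (∀ e : E, (e : Sym2 V) ∉ H.edgeSet → τ e = 0) ∧
      sourceMap hE τ = Pi.single x 1 + Pi.single y 1 := by
  have : Nonempty V := ⟨x⟩
  obtain ⟨p⟩ := h
  induction p with
  | nil => exact ⟨0, fun _ _ => rfl, by rw [map_zero, CharTwo.add_self_eq_zero]⟩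
  | @cons a b c hab q ih =>
    obtain ⟨τ, hτ, hτsrc⟩ := ih
    let ab : E := ⟨s(a, b), hHE hab⟩
    refine ⟨Pi.single ab 1 + τ, fun e he => ?_, ?_⟩
    · have hne : e ≠ ab := fun h => he (h ▸ hab)
      simp [hne, hτ e he]
    · rw [map_add, hτsrc, sourceMap_single hE rfl hab.ne, add_assoc,
        CharTwo.add_cancel_left]

/-- Join each point of `S` to a fixed one by a walk. -/
theorem exists_sourceMap_eq (hHE : H.edgeSet ⊆ E) {S : Finset V}
    (hS : ∀ x ∈ S, ∀ y ∈ S, H.Reachable x y) {σ : V → ZMod 2} (hσ : ∀ v ∉ S, σ v = 0)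
    (hsum : ∑ v ∈ S, σ v = 0) :
    ∃ τ : E → ZMod 2, (∀ e : E, (e : Sym2 V) ∉ H.edgeSet → τ e = 0) ∧ sourceMap hE τ = σ := by
  classical
  rcases S.eq_empty_or_nonempty with rfl | ⟨w, hw⟩
  · exact ⟨0, fun _ _ => rfl, by ext v; simp [hσ v (notMem_empty v)]⟩
  choose! τ hτ using fun v (hv : v ∈ S) =>
    exists_sourceMap_eq_single_add_single hE hHE (hS v hv w hw)
  refine ⟨∑ v ∈ S, σ v • τ v, fun e he => ?_, ?_⟩
  · simp only [Finset.sum_apply, Pi.smul_apply]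
    exact sum_eq_zero fun v hv => by rw [(hτ v hv).1 e he, smul_zero]
  · rw [map_sum, sum_congr rfl fun v hv => by rw [map_smul, (hτ v hv).2]]
    simp only [smul_add, sum_add_distrib, ← sum_smul, hsum, zero_smul, add_zero]
    ext u
    by_cases hu : u ∈ S <;> simp [Finset.sum_apply, Pi.single_apply, hu, hσ]

end Correction

theorem finite_eVerts {F : Set (Sym2 V)} (hF : F.Finite) : (eVerts F).Finite := by
  classical
  exact (hF.biUnion fun e _ => e.toFinset.finite_toSet).subset fun v ⟨e, he, hv⟩ =>
    Set.mem_biUnion he (Sym2.mem_toFinset.mpr hv)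

/-- As `∂δ = 0`, the parts of `δ` on `F` and off `F` have the same sources. -/
theorem exists_incident_of_sourceMap_indicator_ne_zero {E : Set (Sym2 V)}
    (hE : LocallyFiniteEdgeSet E) {δ : E → ZMod 2} (hδ : sourceMap hE δ = 0) (F : Set E)
    {v : V} (hv : sourceMap hE (F.indicator δ) v ≠ 0) :
    (∃ e ∈ F, v ∈ (e : Sym2 V)) ∧ ∃ e ∉ F, v ∈ (e : Sym2 V) := by
  have hcompl : sourceMap hE (Fᶜ.indicator δ) v ≠ 0 := by
    rwa [Set.indicator_compl, map_sub, hδ, zero_sub, Pi.neg_apply, neg_ne_zero]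
  obtain ⟨e, hve, he⟩ := exists_apply_ne_zero_of_sourceMap_ne_zero hE hv
  obtain ⟨e', hve', he'⟩ := exists_apply_ne_zero_of_sourceMap_ne_zero hE hcompl
  exact ⟨⟨e, Set.mem_of_indicator_ne_zero he, hve⟩, e', Set.mem_of_indicator_ne_zero he', hve'⟩

theorem exists_isEvenConf_restrictConf_eq_s5 {E1 E2 E3 : Set (Sym2 V)}
    (hd12 : Disjoint E1 E2) (hd13 : Disjoint E1 E3) (hd23 : Disjoint E2 E3)
    (h1fin : E1.Finite) (hloop : ∀ e ∈ E1, ¬e.IsDiag) (hE : LocallyFiniteEdgeSet (E1 ∪ E2 ∪ E3))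
    (hW : ∀ x ∈ eVerts E2, ∀ y ∈ eVerts E2, (SimpleGraph.fromEdgeSet E2).Reachable x y)
    (hcommon : eVerts E1 ∩ eVerts E3 ⊆ eVerts E2)
    {δ : (E1 ∪ E2 ∪ E3 : Set (Sym2 V)) → ZMod 2} (hδ : IsEvenConf δ) :
    ∃ θ : (E1 ∪ E2 ∪ E3 : Set (Sym2 V)) → ZMod 2, IsEvenConf θ ∧
      restrictConf (Set.subset_union_left.trans Set.subset_union_left : E1 ⊆ E1 ∪ E2 ∪ E3) θ =
        restrictConf (Set.subset_union_left.trans Set.subset_union_left : E1 ⊆ E1 ∪ E2 ∪ E3) δ ∧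
      restrictConf (Set.subset_union_right : E3 ⊆ E1 ∪ E2 ∪ E3) θ = 0 := by
  classical
  rw [isEvenConf_iff_sourceMap_eq_zero hE] at hδ
  set ζ := ({e | ↑e ∈ E1} : Set (E1 ∪ E2 ∪ E3 : Set (Sym2 V))).indicator δ
  set σ := sourceMap hE ζ
  have hσW : ∀ v, σ v ≠ 0 → v ∈ eVerts E1 ∧ v ∈ eVerts E2 := by
    intro v hv
    obtain ⟨⟨e, he, hve⟩, e', he', hve'⟩ :=
      exists_incident_of_sourceMap_indicator_ne_zero hE hδ _ hv
    refine ⟨⟨e, he, hve⟩, ?_⟩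
    rcases e'.2 with (h1 | h2) | h3
    · exact absurd h1 he'
    · exact ⟨e', h2, hve'⟩
    · exact hcommon ⟨⟨e, he, hve⟩, e', h3, hve'⟩
  set T := (finite_eVerts h1fin).toFinset
  have hζ : ∀ e, ζ e ≠ 0 → (e : Sym2 V) ∈ E1 := fun _ => Set.mem_of_indicator_ne_zero
  have hsum : ∑ v ∈ T, σ v = 0 :=
    sum_sourceMap_eq_zero hE (fun e he => hloop e (hζ e he)) T
      fun e he v hv => by simpa [T] using ⟨e, hζ e he, hv⟩
  have hE2 : (SimpleGraph.fromEdgeSet E2).edgeSet ⊆ E2 := by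
    rw [SimpleGraph.edgeSet_fromEdgeSet]; exact Set.sdiff_subset
  obtain ⟨τ, hτE2, hτ⟩ := exists_sourceMap_eq hE (S := T.filter (σ · ≠ 0))
    (fun e he => Or.inl (Or.inr (hE2 he)))
    (fun x hx y hy => hW x (hσW x (mem_filter.mp hx).2).2 y (hσW y (mem_filter.mp hy).2).2)
    (fun v hv => Classical.byContradiction fun h =>
      hv (mem_filter.mpr ⟨by simpa [T] using (hσW v h).1, h⟩))
    (by rw [sum_filter_ne_zero, hsum])
  refine ⟨ζ + τ, ?_, ?_, ?_⟩
  · rw [isEvenConf_iff_sourceMap_eq_zero hE, map_add, hτ]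
    exact funext fun v => CharTwo.add_self_eq_zero (σ v)
  · ext e
    rw [restrictConf, Pi.add_apply, hτE2 _ fun h => Set.disjoint_left.mp hd12 e.2 (hE2 h),
      add_zero]
    simp [ζ, restrictConf, e.2]
  · ext e
    rw [restrictConf, Pi.add_apply, hτE2 _ fun h => Set.disjoint_left.mp hd23 (hE2 h) e.2,
      add_zero]
    simp [ζ, Set.disjoint_right.mp hd13 e.2]

section Independence

open scoped ENNReal

variable {X α : Type*} [MeasurableSpace X] {μ : Measure X}

theorem measure_preimage_inter_eq_ncard_mul [MeasurableSpace α] [MeasurableSingletonClass α]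
    [Finite α] {f : X → α} (hf : Measurable f) {K : Set α} (hK : ∀ᵐ x ∂μ, f x ∈ K)
    {T : Set X} {c : ℝ≥0∞} (hc : ∀ a ∈ K, μ (f ⁻¹' {a} ∩ T) = c)
    (A : Set α) : μ (f ⁻¹' A ∩ T) = (A ∩ K).ncard * c := by
  classical
  have := Fintype.ofFinite α
  have hAK : (f ⁻¹' A ∩ T : Set X) =ᵐ[μ] (f ⁻¹' (A ∩ K).toFinset ∩ T : Set X) := by
    refine Filter.eventuallyEq_set.mpr ?_
    filter_upwards [hK] with x hx
    simp [hx]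
  rw [measure_congr hAK, ← Measure.restrict_apply (hf (Finset.measurableSet _)),
    ← sum_measure_preimage_singleton _ fun a _ => hf (measurableSet_singleton a),
    sum_congr rfl fun a ha => by
      rw [Measure.restrict_apply (hf (measurableSet_singleton a)),
        hc a (Set.mem_toFinset.mp ha).2],
    sum_const, nsmul_eq_mul, Set.ncard_eq_toFinset_card']

theorem measure_preimage_inter_eq_mul_of_fibers [IsProbabilityMeasure μ] [MeasurableSpace α]
    [MeasurableSingletonClass α] [Finite α] {f : X → α} (hf : Measurable f) {K : Set α}
    (hK : ∀ᵐ x ∂μ, f x ∈ K) {S : Set X} (a₀ : α)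
    (hfibS : ∀ a ∈ K, μ (f ⁻¹' {a} ∩ S) = μ (f ⁻¹' {a₀} ∩ S))
    (hfib : ∀ a ∈ K, μ (f ⁻¹' {a}) = μ (f ⁻¹' {a₀})) (A : Set α) :
    μ (f ⁻¹' A ∩ S) = μ (f ⁻¹' A) * μ S := by
  have hfib' : ∀ a ∈ K, μ (f ⁻¹' {a} ∩ Set.univ) = μ (f ⁻¹' {a₀}) := by simpa using hfib
  have hAS := measure_preimage_inter_eq_ncard_mul hf hK hfibS A
  have hA := measure_preimage_inter_eq_ncard_mul hf hK hfib' A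
  have hS' := measure_preimage_inter_eq_ncard_mul hf hK hfibS Set.univ
  have hone := measure_preimage_inter_eq_ncard_mul hf hK hfib' Set.univ
  rw [Set.inter_univ] at hA
  rw [Set.preimage_univ, Set.univ_inter] at hS'
  rw [Set.preimage_univ, Set.univ_inter, measure_univ] at hone
  rw [hAS, hA, hS']
  calc _ = (A ∩ K).ncard * μ (f ⁻¹' {a₀} ∩ S) * ((Set.univ ∩ K).ncard * μ (f ⁻¹' {a₀})) := by
        rw [← hone, mul_one]
    _ = _ := by ring

theorem measure_preimage_singleton_inter_eq_of_map_add [AddGroup X] [MeasurableAdd X]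
    [AddGroup α] {θ : X} (hθ : μ.map (· + θ) = μ) (p : X →+ α) {S : Set X}
    (hSθ : (· + θ) ⁻¹' S = S) (a : α) :
    μ (p ⁻¹' {a} ∩ S) = μ (p ⁻¹' {a + p θ} ∩ S) := by
  have hpre : (· + θ) ⁻¹' (p ⁻¹' {a + p θ} ∩ S) = p ⁻¹' {a} ∩ S := by
    rw [Set.preimage_inter, hSθ]
    ext x
    simp
  rw [← hpre, ← (measurableEmbedding_addRight θ).map_apply, hθ]

end Independence

def restrictConfHom {E' E : Set (Sym2 V)} (h : E' ⊆ E) : (E → ZMod 2) →+ (E' → ZMod 2) where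
  toFun := restrictConf h
  map_zero' := rfl
  map_add' _ _ := rfl

theorem measurable_restrictConf {E' E : Set (Sym2 V)} (h : E' ⊆ E) :
    Measurable (restrictConf h) :=
  measurable_pi_lambda _ fun _ => measurable_pi_apply _

theorem IsUEG.measure_restrictConf_inter_eq_mul {E F G : Set (Sym2 V)}
    {μ : Measure (E → ZMod 2)} (hμ : IsUEG E μ) (hF : F ⊆ E) (hG : G ⊆ E) (hFfin : F.Finite)
    (hglue : ∀ δ : E → ZMod 2, IsEvenConf δ →
      ∃ θ, IsEvenConf θ ∧ restrictConf hF θ = restrictConf hF δ ∧ restrictConf hG θ = 0)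
    (A : Set (F → ZMod 2)) (B : Set (G → ZMod 2)) :
    μ (restrictConf hF ⁻¹' A ∩ restrictConf hG ⁻¹' B) =
      μ (restrictConf hF ⁻¹' A) * μ (restrictConf hG ⁻¹' B) := by
  obtain ⟨hprob, heven, hinv⟩ := hμ
  have : Finite F := hFfin.to_subtype
  let p := restrictConfHom hF
  let q := restrictConfHom hG
  have hp : Measurable p := measurable_restrictConf hF
  set K := p '' {ω | IsEvenConf ω}
  have hK : ∀ᵐ ω ∂μ, p ω ∈ K := by
    rw [ae_iff_measure_eq (hp K.toFinite.measurableSet).nullMeasurableSet, measure_univ]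
    exact le_antisymm prob_le_one (heven ▸ measure_mono fun ω hω => ⟨ω, hω, rfl⟩)
  have hfiber : ∀ T, (∀ θ, q θ = 0 → (· + θ) ⁻¹' T = T) →
      ∀ a ∈ K, μ (p ⁻¹' {a} ∩ T) = μ (p ⁻¹' {0} ∩ T) := by
    rintro T hTq _ ⟨δ, hδ, rfl⟩
    obtain ⟨θ, hθ, hpθ, hqθ⟩ := hglue δ hδ
    calc μ (p ⁻¹' {p δ} ∩ T) = μ (p ⁻¹' {0 + p θ} ∩ T) := by
          rw [zero_add]; exact congrArg (fun b => μ (p ⁻¹' {b} ∩ T)) hpθ.symm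
      _ = μ (p ⁻¹' {0} ∩ T) := (measure_preimage_singleton_inter_eq_of_map_add (hinv θ hθ) p
          (hTq θ hqθ) 0).symm
  exact measure_preimage_inter_eq_mul_of_fibers hp hK 0
    (hfiber _ fun θ hθ => by ext ω; change q (ω + θ) ∈ B ↔ q ω ∈ B; rw [map_add, hθ, add_zero])
    (by simpa using hfiber Set.univ (by simp)) A

end

theorem ueg_independence_across_separating_surface_general {V : Type}
    (E1 E2 E3 : Set (Sym2 V))
    (hd12 : Disjoint E1 E2) (hd13 : Disjoint E1 E3) (hd23 : Disjoint E2 E3)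
    (h1fin : E1.Finite)
    (hsimple : ∀ e ∈ E1 ∪ E2 ∪ E3, ¬ e.IsDiag)
    (hlf : ∀ v : V, {e : Sym2 V | e ∈ E1 ∪ E2 ∪ E3 ∧ v ∈ e}.Finite)
    (hWconn : ∀ x ∈ eVerts E2, ∀ y ∈ eVerts E2,
      (SimpleGraph.fromEdgeSet E2).Reachable x y)
    (hsep : ∀ x y : V, x ∈ eVerts E1 → y ∈ eVerts E3 →
      ∀ p : (SimpleGraph.fromEdgeSet (E1 ∪ E2 ∪ E3)).Walk x y,
        ∃ w ∈ eVerts E2, w ∈ p.support) :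
    (∃ μ, IsUEG (E1 ∪ E2 ∪ E3) μ) ∧
    ∀ μ, IsUEG (E1 ∪ E2 ∪ E3) μ →
      ∀ (A : Set (E1 → ZMod 2)) (B : Set (E3 → ZMod 2)),
        MeasurableSet A → MeasurableSet B →
        μ (restrictConf (Set.subset_union_left.trans Set.subset_union_left :
              E1 ⊆ E1 ∪ E2 ∪ E3) ⁻¹' A
            ∩ restrictConf (Set.subset_union_right : E3 ⊆ E1 ∪ E2 ∪ E3) ⁻¹' B)
          = μ (restrictConf (Set.subset_union_left.trans Set.subset_union_left :
              E1 ⊆ E1 ∪ E2 ∪ E3) ⁻¹' A)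
            * μ (restrictConf (Set.subset_union_right : E3 ⊆ E1 ∪ E2 ∪ E3) ⁻¹' B) := by
  refine ⟨exists_isUEG hlf, fun μ hμ A B _ _ => ?_⟩
  have hcommon : eVerts E1 ∩ eVerts E3 ⊆ eVerts E2 := fun v hv => by
    obtain ⟨w, hw, hwv⟩ := hsep v v hv.1 hv.2 .nil
    rw [SimpleGraph.Walk.support_nil, List.mem_singleton] at hwv
    exact hwv ▸ hw
  exact hμ.measure_restrictConf_inter_eq_mul _ _ h1fin
    (fun δ hδ => exists_isEvenConf_restrictConf_eq_s5 hd12 hd13 hd23 h1fin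
      (fun e he => hsimple e (Or.inl (Or.inl he))) hlf hWconn hcommon hδ) A B

theorem ueg_independence_across_separating_surface {V : Type}
    (E1 E2 E3 : Set (Sym2 V))
    (hd12 : Disjoint E1 E2) (hd13 : Disjoint E1 E3) (hd23 : Disjoint E2 E3)
    (h1fin : E1.Finite) (h2fin : E2.Finite)
    (hsimple : ∀ e ∈ E1 ∪ E2 ∪ E3, ¬ e.IsDiag)
    (hlf : ∀ v : V, {e : Sym2 V | e ∈ E1 ∪ E2 ∪ E3 ∧ v ∈ e}.Finite)
    (hWne : (eVerts E2).Nonempty)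
    (hWconn : ∀ x ∈ eVerts E2, ∀ y ∈ eVerts E2,
      (SimpleGraph.fromEdgeSet E2).Reachable x y)
    (hsep : ∀ x y : V, x ∈ eVerts E1 → y ∈ eVerts E3 →
      ∀ p : (SimpleGraph.fromEdgeSet (E1 ∪ E2 ∪ E3)).Walk x y,
        ∃ w ∈ eVerts E2, w ∈ p.support) :
    (∃ μ, IsUEG (E1 ∪ E2 ∪ E3) μ) ∧
    ∀ μ, IsUEG (E1 ∪ E2 ∪ E3) μ →
      ∀ (A : Set (E1 → ZMod 2)) (B : Set (E3 → ZMod 2)),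
        MeasurableSet A → MeasurableSet B →
        μ (restrictConf (Set.subset_union_left.trans Set.subset_union_left :
              E1 ⊆ E1 ∪ E2 ∪ E3) ⁻¹' A
            ∩ restrictConf (Set.subset_union_right : E3 ⊆ E1 ∪ E2 ∪ E3) ⁻¹' B)
          = μ (restrictConf (Set.subset_union_left.trans Set.subset_union_left :
              E1 ⊆ E1 ∪ E2 ∪ E3) ⁻¹' A)
            * μ (restrictConf (Set.subset_union_right : E3 ⊆ E1 ∪ E2 ∪ E3) ⁻¹' B) :=
  ueg_independence_across_separating_surface_general E1 E2 E3 hd12 hd13 hd23 h1fin hsimple hlf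
    hWconn hsep
end
end

section
/- Let H be a compact Hausdorff abelian topological group and let (Γ_α)_{α∈I} be a net of closed subgroups of H indexed by a directed set I that is increasing, i.e. Γ_α ⊆ Γ_β whenever α ≤ β. Let μ_α denote the Haar probability measure on Γ_α, viewed as a Borel probability measure on H. Then the net (μ_α) converges weakly to the Haar probability measure on the closed subgroup Γ given by the closure of the union of the Γ_α. -/
/-!
Fix a continuous `f` and `ε > 0`. Uniform continuity on the compact group gives a neighbourhood
`U` of `1` with `|f (x * u) - f x| ≤ ε`, and compactness of `S = closure (⋃ α, Γ α)` makes
`S ⊆ Γ α * U` for all large `α`. Now integrate `f (g * x) - f g` against `g ∼ μ α` and `x ∼ ν`.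
Integrating in `x` first, invariance of `ν` under `Γ α ⊆ S` gives `∫ f ∂ν - ∫ f ∂(μ α)`.
Integrating in `g` first, write `x = h * u` with `h ∈ Γ α`, `u ∈ U`: invariance of `μ α` under
`h` turns the inner integral into `∫ (f (g * u) - f g) ∂(μ α)`, of norm at most `ε`.
-/

open MeasureTheory

/-- `μ` is the Haar probability measure of the (compact) subgroup of `H` with carrier `S`,
viewed as a Borel probability measure on `H`: it is a probability measure supported on `S`
and invariant under translation by every element of `S`. -/
def IsHaarOnSubgroup {H : Type} [CommGroup H] [TopologicalSpace H] [MeasurableSpace H]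
    (S : Set H) (μ : Measure H) : Prop :=
  IsProbabilityMeasure μ ∧ μ S = 1 ∧
    ∀ g ∈ S, Measure.map (fun x => g * x) μ = μ

open Filter Topology Pointwise

theorem Continuous.integrable_of_compactSpace {X E : Type*} [TopologicalSpace X] [CompactSpace X]
    [MeasurableSpace X] [OpensMeasurableSpace X] [NormedAddCommGroup E] {f : X → E}
    (hf : Continuous f) (μ : Measure X) [IsFiniteMeasure μ] : Integrable f μ :=
  hf.integrable_of_hasCompactSupport (HasCompactSupport.of_compactSpace f)

theorem Continuous.eventually_forall_dist_mul_lt {G E : Type*} [Group G] [TopologicalSpace G]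
    [IsTopologicalGroup G] [CompactSpace G] [PseudoMetricSpace E] {f : G → E} (hf : Continuous f)
    {ε : ℝ} (hε : 0 < ε) : ∀ᶠ u in 𝓝 (1 : G), ∀ x, dist (f (x * u)) (f x) < ε := by
  have := isCompact_univ.eventually_forall_of_forall_eventually (x₀ := (1 : G))
    (P := fun u x => dist (f (x * u)) (f x) < ε) fun x _ => by
      have hc : Continuous fun z : G × G => dist (f (z.2 * z.1)) (f z.2) := by fun_prop
      exact hc.continuousAt.eventually_lt continuousAt_const (by simpa using hε)
  simpa using this

theorem Monotone.eventually_closure_iUnion_subset_mul {G ι : Type*} [Group G] [TopologicalSpace G]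
    [IsTopologicalGroup G] [Preorder ι] [Nonempty ι] [IsDirected ι (· ≤ ·)] {s : ι → Set G}
    (hs : Monotone s) (hc : IsCompact (closure (⋃ i, s i))) {U : Set G} (hU : U ∈ 𝓝 1) :
    ∀ᶠ i in atTop, closure (⋃ i, s i) ⊆ s i * U := by
  obtain ⟨V, hVU, hVo, h1V⟩ := mem_nhds_iff.1 hU
  have hcover : closure (⋃ i, s i) ⊆ ⋃ i, s i * V := by
    rw [← Set.iUnion_mul, ← hVo.closure_mul]
    exact Set.subset_mul_left _ h1V
  have hdir : Directed (· ⊆ ·) fun i => s i * V :=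
    Monotone.directed_le fun i j hij => Set.mul_subset_mul_right (hs hij)
  obtain ⟨i₀, hi₀⟩ := hc.elim_directed_cover _ (fun i => hVo.mul_left) hcover hdir
  exact eventually_atTop.2 ⟨i₀, fun i hi => hi₀.trans (Set.mul_subset_mul (hs hi) hVU)⟩

namespace IsHaarOnSubgroup

variable {H : Type} [CommGroup H] [TopologicalSpace H] [MeasurableSpace H] {S : Set H}
  {μ : Measure H}

theorem ae_mem (hμ : IsHaarOnSubgroup S μ) (hS : MeasurableSet S) : ∀ᵐ x ∂μ, x ∈ S := by
  have := hμ.1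
  exact (ae_iff_measure_eq (p := (· ∈ S)) hS.nullMeasurableSet).2 (by simp [hμ.2.1])

theorem integral_comp_mul_left [MeasurableMul H] {E : Type*} [NormedAddCommGroup E]
    [NormedSpace ℝ E] (hμ : IsHaarOnSubgroup S μ) {g : H} (hg : g ∈ S) (f : H → E) :
    ∫ x, f (g * x) ∂μ = ∫ x, f x ∂μ := by
  conv_rhs => rw [← hμ.2.2 g hg]
  exact ((measurableEmbedding_mulLeft g).integral_map f).symm

end IsHaarOnSubgroup

theorem exists_isHaarOnSubgroup {H : Type} [CommGroup H] [TopologicalSpace H]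
    [IsTopologicalGroup H] [CompactSpace H] [MeasurableSpace H] [BorelSpace H] (K : Subgroup H)
    (hK : IsClosed (K : Set H)) : ∃ ν : Measure H, IsHaarOnSubgroup K ν := by
  have : CompactSpace K := isCompact_iff_compactSpace.mp hK.isCompact
  have : BorelSpace K := Subtype.borelSpace _
  let μK : Measure K := Measure.haarMeasure ⊤
  have : IsProbabilityMeasure μK :=
    ⟨by simpa using Measure.haarMeasure_self (K₀ := (⊤ : TopologicalSpace.PositiveCompacts K))⟩
  have hval : Measurable (Subtype.val : K → H) := continuous_subtype_val.measurable
  refine ⟨μK.map Subtype.val, Measure.isProbabilityMeasure_map hval.aemeasurable, ?_, ?_⟩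
  · rw [Measure.map_apply hval hK.measurableSet, Subtype.coe_preimage_self, measure_univ]
  · intro g hg
    have hcomm : (g * ·) ∘ Subtype.val = Subtype.val ∘ ((⟨g, hg⟩ : K) * ·) := rfl
    rw [Measure.map_map (measurable_const_mul g) hval, hcomm,
      ← Measure.map_map hval (measurable_const_mul _), map_mul_left_eq_self]

theorem dist_integral_le_of_subset_mul {H : Type} {E : Type*} [CommGroup H] [TopologicalSpace H]
    [IsTopologicalGroup H] [CompactSpace H] [MeasurableSpace H] [BorelSpace H]
    [NormedAddCommGroup E] [NormedSpace ℝ E] [CompleteSpace E] {K S U : Set H} {μ ν : Measure H}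
    (hμ : IsHaarOnSubgroup K μ) (hν : IsHaarOnSubgroup S ν) (hK : MeasurableSet K)
    (hS : MeasurableSet S) (hKS : K ⊆ S) (hSKU : S ⊆ K * U) {f : H → E} (hf : Continuous f)
    {ε : ℝ} (hfU : ∀ u ∈ U, ∀ x, dist (f (x * u)) (f x) ≤ ε) :
    dist (∫ x, f x ∂μ) (∫ x, f x ∂ν) ≤ ε := by
  have := hμ.1
  have := hν.1
  have hint : ∀ (ρ : Measure H) [IsFiniteMeasure ρ] (a : H),
      Integrable (fun x => f (a * x)) ρ ∧ Integrable (fun x => f (x * a)) ρ := fun ρ _ a =>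
    ⟨(hf.comp (continuous_const_mul a)).integrable_of_compactSpace ρ,
      (hf.comp (continuous_mul_const a)).integrable_of_compactSpace ρ⟩
  have hF : ∫ g, ∫ x, (f (g * x) - f g) ∂ν ∂μ = ∫ x, f x ∂ν - ∫ x, f x ∂μ := by
    have hinner : ∀ g ∈ K, ∫ x, (f (g * x) - f g) ∂ν = ∫ x, f x ∂ν - f g := fun g hg => by
      rw [integral_sub (hint ν g).1 (integrable_const _), hν.integral_comp_mul_left (hKS hg),
        integral_const, probReal_univ, one_smul]
    rw [integral_congr_ae ((hμ.ae_mem hK).mono hinner), integral_sub (integrable_const _)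
      (hf.integrable_of_compactSpace μ), integral_const, probReal_univ, one_smul]
  have hbound : ∀ᵐ x ∂ν, ‖∫ g, (f (g * x) - f g) ∂μ‖ ≤ ε := by
    filter_upwards [hν.ae_mem hS] with x hx
    obtain ⟨h, hh, u, hu, rfl⟩ := hSKU hx
    have htranslate : ∫ g, f (g * (h * u)) ∂μ = ∫ g, f (g * u) ∂μ := by
      simp_rw [mul_left_comm _ h, ← mul_assoc]
      exact hμ.integral_comp_mul_left hh fun g => f (g * u)
    rw [integral_sub (hint μ _).2 (hf.integrable_of_compactSpace μ), htranslate,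
      ← integral_sub (hint μ u).2 (hf.integrable_of_compactSpace μ)]
    refine (norm_integral_le_of_norm_le_const (C := ε) (.of_forall fun g => ?_)).trans_eq ?_
    · exact (dist_eq_norm _ _).symm.trans_le (hfU u hu g)
    · simp
  have hswap := integral_integral_swap_of_hasCompactSupport (μ := μ) (ν := ν)
    (f := fun g x => f (g * x) - f g) (by fun_prop) (HasCompactSupport.of_compactSpace _)
  rw [dist_comm, dist_eq_norm, ← hF, hswap]
  exact (norm_integral_le_of_norm_le_const hbound).trans_eq (by simp)

theorem haar_measures_of_increasing_net_converge_general
    {H : Type} [CommGroup H] [TopologicalSpace H] [IsTopologicalGroup H]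
    [CompactSpace H] [MeasurableSpace H] [BorelSpace H]
    {I : Type} [Preorder I] [Nonempty I] [IsDirected I (· ≤ ·)]
    (Γ : I → Subgroup H) (hmono : Monotone Γ)
    (hclosed : ∀ α, IsClosed (Γ α : Set H))
    (μ : I → Measure H) (hμ : ∀ α, IsHaarOnSubgroup (Γ α : Set H) (μ α)) :
    (∃ ν, IsHaarOnSubgroup (closure (⋃ α, (Γ α : Set H))) ν) ∧
    ∀ ν, IsHaarOnSubgroup (closure (⋃ α, (Γ α : Set H))) ν →
      ∀ f : H → ℝ, Continuous f →
        Filter.Tendsto (fun α => ∫ x, f x ∂(μ α)) Filter.atTop (nhds (∫ x, f x ∂ν)) := by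
  have hS : closure (⋃ α, (Γ α : Set H)) = (⨆ α, Γ α).topologicalClosure := by
    rw [Subgroup.topologicalClosure_coe, Subgroup.coe_iSup_of_directed hmono.directed_le]
  refine ⟨hS ▸ exists_isHaarOnSubgroup _ (Subgroup.isClosed_topologicalClosure _),
    fun ν hν f hf => Metric.tendsto_nhds.2 fun ε hε => ?_⟩
  obtain ⟨U, hU, hfU⟩ := (hf.eventually_forall_dist_mul_lt (half_pos hε)).exists_mem
  have hcover := (SetLike.coe_mono.comp hmono).eventually_closure_iUnion_subset_mul
    isClosed_closure.isCompact hU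
  filter_upwards [hcover] with α hα
  refine (dist_integral_le_of_subset_mul (hμ α) hν (hclosed α).measurableSet
    isClosed_closure.measurableSet ((Set.subset_iUnion (fun β => (Γ β : Set H)) α).trans
    subset_closure) hα hf fun u hu x => (hfU u hu x).le).trans_lt (half_lt_self hε)

/-- For an increasing net of closed subgroups of a compact Hausdorff abelian
group, the Haar probability measures converge weakly to the Haar probability measure on the
closure of the union. -/
theorem haar_measures_of_increasing_net_converge
    {H : Type} [CommGroup H] [TopologicalSpace H] [IsTopologicalGroup H]
    [CompactSpace H] [T2Space H] [MeasurableSpace H] [BorelSpace H]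
    {I : Type} [Preorder I] [Nonempty I] [IsDirected I (· ≤ ·)]
    (Γ : I → Subgroup H) (hmono : Monotone Γ)
    (hclosed : ∀ α, IsClosed (Γ α : Set H))
    (μ : I → Measure H) (hμ : ∀ α, IsHaarOnSubgroup (Γ α : Set H) (μ α)) :
    (∃ ν, IsHaarOnSubgroup (closure (⋃ α, (Γ α : Set H))) ν) ∧
    ∀ ν, IsHaarOnSubgroup (closure (⋃ α, (Γ α : Set H))) ν →
      ∀ f : H → ℝ, Continuous f →
        Filter.Tendsto (fun α => ∫ x, f x ∂(μ α)) Filter.atTop (nhds (∫ x, f x ∂ν)) :=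
  haar_measures_of_increasing_net_converge_general Γ hmono hclosed μ hμ
end

section
/- Let G=(V,E) be a finite graph, let x ∈ (0,1), and set p = 2x/(1+x). If η and ζ are independent random configurations with η distributed according to the loop O(1) measure ℓ^0_{x,G} and ζ distributed according to Bernoulli bond percolation P_{x,G}, then the pointwise maximum η ∨ ζ (union of the open edge sets) is distributed according to the free random-cluster measure φ^0_{p,G}. -/
/-!
If `η ⊆ ω`, the event `η ∨ ζ = ω` forces `ζ` to be open on `ω \ η` and closed off `ω`, leaving it
free on `η`; so `x ^ o(η) · P_x[η ∨ ζ = ω] = P_x[ω]` for every even `η ⊆ ω`, and the law of `η ∨ ζ`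
is proportional to `N(ω) · P_x[ω]`, where `N(ω)` counts the even subgraphs of `ω`.
These form the kernel of the mod-2 boundary map on the edge space of `ω`, whose image consists
exactly of the vertex functions summing to zero on every cluster of `ω`; hence
`N(ω) · 2 ^ |V| = 2 ^ o(ω) · 2 ^ κ(ω)`. For `p = 2x/(1+x)` the random-cluster weight is
`(2x) ^ o(ω) (1-x) ^ (|E| - o(ω)) 2 ^ κ(ω) / (1+x) ^ |E|`, again a constant multiple of `N(ω) · P_x[ω]`.
-/

open MeasureTheory

noncomputable section

attribute [local instance] Classical.propDecidable

variable {V : Type} [Fintype V] [DecidableEq V] (G : SimpleGraph V) [Fintype G.edgeSet]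

/-- The number of open edges of a configuration. -/
def openCount (ω : G.edgeSet → ZMod 2) : ℕ :=
  (Finset.univ.filter fun e : G.edgeSet => ω e = 1).card

/-- The number `κ^ξ(ω)` of classes of the smallest equivalence relation containing the
boundary condition `ξ` and relating the endpoints of every open edge of `ω`. -/
def clusterCount (ξ : V → V → Prop) (ω : G.edgeSet → ZMod 2) : ℕ :=
  Nat.card (Quot (fun a b : V =>
    ξ a b ∨ ∃ h : G.Adj a b, ω ⟨s(a, b), (G.mem_edgeSet).mpr h⟩ = 1))

/-- The random-cluster weight of a configuration. -/
def rcWeight (p : ℝ) (ξ : V → V → Prop) (ω : G.edgeSet → ZMod 2) : ℝ :=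
  p ^ openCount G ω * (1 - p) ^ (Fintype.card G.edgeSet - openCount G ω) *
    2 ^ clusterCount G ξ ω

/-- The random-cluster measure `φ^ξ_{p,G}` as a probability mass function. -/
def rcPMF (p : ℝ) (ξ : V → V → Prop) (ω : G.edgeSet → ZMod 2) : ℝ :=
  rcWeight G p ξ ω / ∑ ω' : G.edgeSet → ZMod 2, rcWeight G p ξ ω'

/-- The loop O(1) measure `ℓ^0_{x,G}` as a probability mass function. -/
def loopPMF (x : ℝ) (η : G.edgeSet → ZMod 2) : ℝ :=
  (if IsEvenConf η then x ^ openCount G η else 0) /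
    ∑ η' : G.edgeSet → ZMod 2, if IsEvenConf η' then x ^ openCount G η' else 0

/-- Bernoulli(p) bond percolation as a probability mass function. -/
def berPMF (p : ℝ) (ζ : G.edgeSet → ZMod 2) : ℝ :=
  p ^ openCount G ζ * (1 - p) ^ (Fintype.card G.edgeSet - openCount G ζ)

/-- The union (pointwise maximum) of two configurations. -/
def unionConf (η ζ : G.edgeSet → ZMod 2) : G.edgeSet → ZMod 2 :=
  fun e => if η e = 1 ∨ ζ e = 1 then 1 else 0

theorem ZMod.eq_zero_or_eq_one (a : ZMod 2) : a = 0 ∨ a = 1 := by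
  revert a; decide

theorem ZMod.sum_univ_two {M : Type*} [AddCommMonoid M] (f : ZMod 2 → M) :
    ∑ j, f j = f 0 + f 1 :=
  Fin.sum_univ_two f

theorem Pi.single_add_single_self {ι : Type*} [DecidableEq ι] (i : ι) (r : ZMod 2) :
    (Pi.single i r + Pi.single i r : ι → ZMod 2) = 0 := by
  rw [← Pi.single_add, CharTwo.add_self_eq_zero, Pi.single_zero]

theorem LinearMap.card_ker_mul_card_range {R M N : Type*} [Ring R] [AddCommGroup M]
    [AddCommGroup N] [Module R M] [Module R N] (f : M →ₗ[R] N) :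
    Nat.card (LinearMap.ker f) * Nat.card (LinearMap.range f) = Nat.card M := by
  rw [← AddSubgroup.card_mul_index f.toAddMonoidHom.ker, AddSubgroup.index_ker]
  rfl

section Weights

variable {V : Type} (G : SimpleGraph V) [Fintype G.edgeSet]

theorem prod_ite_eq_pow_openCount {M : Type*} [CommMonoid M] (a b : M)
    (ζ : G.edgeSet → ZMod 2) :
    ∏ e, (if ζ e = 1 then a else b)
      = a ^ openCount G ζ * b ^ (Fintype.card G.edgeSet - openCount G ζ) := by
  rw [Finset.prod_ite, Finset.prod_const, Finset.prod_const, openCount, Finset.filter_not,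
    Finset.card_sdiff_of_subset (Finset.filter_subset _ _), Finset.card_univ]

theorem berPMF_eq_prod (p : ℝ) (ζ : G.edgeSet → ZMod 2) :
    berPMF G p ζ = ∏ e, if ζ e = 1 then p else 1 - p :=
  (prod_ite_eq_pow_openCount G p (1 - p) ζ).symm

theorem sum_berPMF (p : ℝ) : ∑ ζ, berPMF G p ζ = 1 := by
  simp_rw [berPMF_eq_prod]
  rw [← Fintype.prod_sum fun _ b => if b = 1 then p else 1 - p]
  simp [ZMod.sum_univ_two]

theorem berPMF_two_mul_div {x : ℝ} (hx : 1 + x ≠ 0) (ω : G.edgeSet → ZMod 2) :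
    berPMF G (2 * x / (1 + x)) ω
      = 2 ^ openCount G ω * berPMF G x ω / (1 + x) ^ Fintype.card G.edgeSet := by
  have h2 : (2 : ℝ) ^ openCount G ω = ∏ e, if ω e = 1 then 2 else 1 := by
    simp [prod_ite_eq_pow_openCount]
  rw [h2, berPMF_eq_prod, berPMF_eq_prod, ← Finset.prod_mul_distrib, ← Finset.card_univ,
    ← Finset.prod_const, ← Finset.prod_div_distrib]
  refine Finset.prod_congr rfl fun e _ => ?_
  split_ifs
  · field_simp
  · field_simp
    ring

theorem rcWeight_eq_berPMF_mul (p : ℝ) (ξ : V → V → Prop) (ω : G.edgeSet → ZMod 2) :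
    rcWeight G p ξ ω = berPMF G p ω * 2 ^ clusterCount G ξ ω :=
  rfl

def loopWeight (x : ℝ) (η : G.edgeSet → ZMod 2) : ℝ :=
  if IsEvenConf η then x ^ openCount G η else 0

theorem loopPMF_eq (x : ℝ) (η : G.edgeSet → ZMod 2) :
    loopPMF G x η = loopWeight G x η / ∑ η', loopWeight G x η' :=
  rfl

def evenSubconfs (ω : G.edgeSet → ZMod 2) : Finset (G.edgeSet → ZMod 2) :=
  Finset.univ.filter fun η => IsEvenConf η ∧ ∀ e, ω e = 0 → η e = 0

theorem pow_openCount_mul_sum_berPMF_unionConf (x : ℝ) (η ω : G.edgeSet → ZMod 2) :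
    x ^ openCount G η * ∑ ζ, (if unionConf G η ζ = ω then berPMF G x ζ else 0)
      = if ∀ e, ω e = 0 → η e = 0 then berPMF G x ω else 0 := by
  have hη : x ^ openCount G η = ∏ e, if η e = 1 then x else 1 := by
    simp [prod_ite_eq_pow_openCount]
  have hζ : ∀ ζ, (if unionConf G η ζ = ω then berPMF G x ζ else 0)
      = ∏ e, if (if η e = 1 ∨ ζ e = 1 then 1 else 0) = ω e
          then (if ζ e = 1 then x else 1 - x) else 0 := fun ζ => by
    rw [Fintype.prod_ite_zero, berPMF_eq_prod]
    exact if_congr funext_iff rfl rfl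
  rw [hη, Finset.sum_congr rfl fun ζ _ => hζ ζ, ← Fintype.prod_sum fun e b =>
      if (if η e = 1 ∨ b = 1 then (1 : ZMod 2) else 0) = ω e then (if b = 1 then x else 1 - x) else 0,
    ← Finset.prod_mul_distrib, berPMF_eq_prod, ← Fintype.prod_ite_zero]
  refine Finset.prod_congr rfl fun e _ => ?_
  rw [ZMod.sum_univ_two]
  rcases ZMod.eq_zero_or_eq_one (η e) with ha | ha <;>
    rcases ZMod.eq_zero_or_eq_one (ω e) with hc | hc <;> simp [ha, hc]

theorem sum_loopWeight_mul_berPMF_unionConf (x : ℝ) (ω : G.edgeSet → ZMod 2) :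
    ∑ η, ∑ ζ, (if unionConf G η ζ = ω then loopWeight G x η * berPMF G x ζ else 0)
      = (evenSubconfs G ω).card * berPMF G x ω := by
  calc _ = ∑ η, loopWeight G x η * ∑ ζ, (if unionConf G η ζ = ω then berPMF G x ζ else 0) := by
        simp_rw [Finset.mul_sum, mul_ite, mul_zero]
    _ = ∑ η, if η ∈ evenSubconfs G ω then berPMF G x ω else 0 := by
        refine Finset.sum_congr rfl fun η _ => ?_
        by_cases hη : IsEvenConf η
        · rw [loopWeight, if_pos hη, pow_openCount_mul_sum_berPMF_unionConf]
          simp only [evenSubconfs, Finset.mem_filter, Finset.mem_univ, true_and, hη]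
        · simp [loopWeight, hη, evenSubconfs]
    _ = _ := by
        rw [← Finset.sum_filter, Finset.filter_mem_eq_inter, Finset.univ_inter, Finset.sum_const,
          nsmul_eq_mul]

theorem sum_card_evenSubconfs_mul_berPMF (x : ℝ) :
    ∑ ω, (evenSubconfs G ω).card * berPMF G x ω = ∑ η, loopWeight G x η := by
  simp_rw [← sum_loopWeight_mul_berPMF_unionConf]
  rw [Finset.sum_comm]
  refine Finset.sum_congr rfl fun η _ => ?_
  rw [Finset.sum_comm]
  simp only [Finset.sum_ite_eq, Finset.mem_univ, if_true]
  rw [← Finset.mul_sum, sum_berPMF, mul_one]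

end Weights

section Boundary

variable {V : Type*}

def edgeBoundary : Sym2 V → V → ZMod 2 :=
  Sym2.lift ⟨fun a b => Pi.single a 1 + Pi.single b 1, fun _ _ => add_comm _ _⟩

@[simp]
theorem edgeBoundary_mk (a b : V) :
    edgeBoundary s(a, b) = Pi.single a 1 + Pi.single b 1 :=
  rfl

theorem edgeBoundary_apply {e : Sym2 V} (he : ¬e.IsDiag) (v : V) :
    edgeBoundary e v = if v ∈ e then 1 else 0 := by
  induction e using Sym2.ind with
  | h a b =>
    have hab : a ≠ b := by simpa using he
    by_cases hva : v = a
    · subst hva; simp [hab]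
    · by_cases hvb : v = b
      · subst hvb; simp [hva]
      · simp [hva, hvb]

variable (G : SimpleGraph V) [Fintype G.edgeSet]

def boundary : (G.edgeSet → ZMod 2) →ₗ[ZMod 2] V → ZMod 2 :=
  Fintype.linearCombination (ZMod 2) fun e => edgeBoundary (e : Sym2 V)

theorem boundary_single (e : G.edgeSet) :
    boundary G (Pi.single e 1) = edgeBoundary (e : Sym2 V) := by
  rw [boundary, Fintype.linearCombination_apply_single, one_smul]

theorem srcAt_eq_boundary (η : G.edgeSet → ZMod 2) (v : V) : srcAt η v = boundary G η v := by
  have hterm : ∀ e : G.edgeSet, η e * edgeBoundary (e : Sym2 V) v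
      = if η e = 1 ∧ v ∈ (e : Sym2 V) then 1 else 0 := fun e => by
    rw [edgeBoundary_apply (G.not_isDiag_of_mem_edgeSet e.2)]
    rcases ZMod.eq_zero_or_eq_one (η e) with h | h <;> simp [h]
  simp only [boundary, Fintype.linearCombination_apply, Finset.sum_apply, Pi.smul_apply,
    smul_eq_mul, hterm, Finset.sum_boole, srcAt]
  rw [← Set.ncard_coe_finset]
  congr
  ext e
  simp

theorem isEvenConf_iff_boundary_eq_zero (η : G.edgeSet → ZMod 2) :
    IsEvenConf η ↔ boundary G η = 0 := by
  simp [IsEvenConf, funext_iff, srcAt_eq_boundary]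

end Boundary

section Clusters

variable {V : Type} (G : SimpleGraph V) (ω : G.edgeSet → ZMod 2)

/-- `clusterCount G Eq ω` is, by definition, `Nat.card (Quot (openRel G ω))`. -/
def openRel (a b : V) : Prop :=
  a = b ∨ ∃ h : G.Adj a b, ω ⟨s(a, b), G.mem_edgeSet.mpr h⟩ = 1

def subconfs : Submodule (ZMod 2) (G.edgeSet → ZMod 2) where
  carrier := {η | ∀ e, ω e = 0 → η e = 0}
  add_mem' ha hb e he := by simp [ha e he, hb e he]
  zero_mem' _ _ := rfl
  smul_mem' c η hη e he := by simp [hη e he]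

theorem card_subconfs [Fintype G.edgeSet] : Nat.card (subconfs G ω) = 2 ^ openCount G ω := by
  have hpi : Finset.univ.filter (· ∈ subconfs G ω)
      = Fintype.piFinset fun e => if ω e = 1 then Finset.univ else {0} := by
    ext η
    simp only [Finset.mem_filter, Finset.mem_univ, true_and, Fintype.mem_piFinset]
    refine forall_congr' fun e => ?_
    rcases ZMod.eq_zero_or_eq_one (ω e) with h | h <;> simp [h]
  rw [Nat.card_eq_fintype_card, Fintype.card_subtype, hpi, Fintype.card_piFinset]
  simp [apply_ite, prod_ite_eq_pow_openCount]

theorem card_ker_boundary_domRestrict [Fintype G.edgeSet] :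
    Nat.card (LinearMap.ker ((boundary G).domRestrict (subconfs G ω)))
      = (evenSubconfs G ω).card := by
  rw [evenSubconfs, ← Fintype.card_subtype, ← Nat.card_eq_fintype_card]
  exact Nat.card_congr
    { toFun k := ⟨k.1.1, (isEvenConf_iff_boundary_eq_zero G _).2 k.2, k.1.2⟩
      invFun η := ⟨⟨η.1, η.2.2⟩, (isEvenConf_iff_boundary_eq_zero G _).1 η.2.1⟩
      left_inv _ := rfl
      right_inv _ := rfl }

theorem single_add_single_mem_map_boundary [Fintype G.edgeSet] {a b : V}
    (h : Relation.EqvGen (openRel G ω) a b) :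
    Pi.single a 1 + Pi.single b 1 ∈ (subconfs G ω).map (boundary G) := by
  induction h with
  | rel a b hab =>
    obtain rfl | ⟨hadj, hopen⟩ := hab
    · rw [Pi.single_add_single_self]; exact zero_mem _
    · refine ⟨Pi.single ⟨s(a, b), G.mem_edgeSet.mpr hadj⟩ 1, fun e he => ?_, ?_⟩
      · rw [Pi.single_apply, if_neg]; rintro rfl; simp [hopen] at he
      · rw [boundary_single, edgeBoundary_mk]
  | refl a => rw [Pi.single_add_single_self]; exact zero_mem _
  | symm a b _ ih => rw [add_comm]; exact ih
  | trans a b c _ _ ihab ihbc =>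
    convert add_mem ihab ihbc using 1
    rw [add_assoc, ← add_assoc (Pi.single b 1), Pi.single_add_single_self, zero_add]

variable [Fintype V]

instance : Fintype (Quot (openRel G ω)) :=
  Fintype.ofFinite _

def clusterSum : (V → ZMod 2) →ₗ[ZMod 2] Quot (openRel G ω) → ZMod 2 :=
  Fintype.linearCombination (ZMod 2) fun v => Pi.single (Quot.mk _ v) 1

def clusterRep : (Quot (openRel G ω) → ZMod 2) →ₗ[ZMod 2] V → ZMod 2 :=
  Fintype.linearCombination (ZMod 2) fun c => Pi.single c.out 1

theorem clusterSum_single (v : V) (r : ZMod 2) :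
    clusterSum G ω (Pi.single v r) = Pi.single (Quot.mk _ v) r := by
  rw [clusterSum, Fintype.linearCombination_apply_single, ← Pi.single_smul', smul_eq_mul,
    mul_one]

theorem clusterRep_single (c : Quot (openRel G ω)) (r : ZMod 2) :
    clusterRep G ω (Pi.single c r) = Pi.single c.out r := by
  rw [clusterRep, Fintype.linearCombination_apply_single, ← Pi.single_smul', smul_eq_mul,
    mul_one]

theorem clusterSum_comp_clusterRep : clusterSum G ω ∘ₗ clusterRep G ω = LinearMap.id :=
  LinearMap.pi_ext fun c r => by
    rw [LinearMap.comp_apply, clusterRep_single, clusterSum_single, Quot.out_eq,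
      LinearMap.id_apply]

theorem clusterSum_edgeBoundary {e : G.edgeSet} (he : ω e = 1) :
    clusterSum G ω (edgeBoundary (e : Sym2 V)) = 0 := by
  obtain ⟨e, he'⟩ := e
  induction e using Sym2.ind with
  | h a b =>
    have hab : Quot.mk (openRel G ω) a = Quot.mk _ b :=
      Quot.sound (Or.inr ⟨G.mem_edgeSet.mp he', he⟩)
    rw [edgeBoundary_mk, map_add, clusterSum_single, clusterSum_single, hab,
      Pi.single_add_single_self]

variable [Fintype G.edgeSet]

theorem map_boundary_le_ker_clusterSum :
    (subconfs G ω).map (boundary G) ≤ LinearMap.ker (clusterSum G ω) := by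
  rintro _ ⟨η, hη, rfl⟩
  rw [LinearMap.mem_ker, boundary, Fintype.linearCombination_apply, map_sum]
  refine Finset.sum_eq_zero fun e _ => ?_
  rcases ZMod.eq_zero_or_eq_one (ω e) with h | h
  · rw [hη e h, zero_smul, map_zero]
  · rw [map_smul, clusterSum_edgeBoundary G ω h, smul_zero]

theorem ker_clusterSum_le_map_boundary :
    LinearMap.ker (clusterSum G ω) ≤ (subconfs G ω).map (boundary G) := by
  intro s hs
  have hrep : clusterRep G ω (clusterSum G ω s)
      = ∑ v, Pi.single (Quot.mk (openRel G ω) v).out (s v) := by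
    conv_lhs => rw [← Finset.univ_sum_single s]
    simp only [map_sum, clusterSum_single, clusterRep_single]
  -- As `clusterSum s = 0`, `s = s + clusterRep (clusterSum s)`: a sum of `δ v + δ (rep v)`.
  have hs' : s = ∑ v, (Pi.single v (s v) + Pi.single (Quot.mk (openRel G ω) v).out (s v)) := by
    rw [Finset.sum_add_distrib, ← hrep, LinearMap.mem_ker.mp hs, map_zero, add_zero,
      Finset.univ_sum_single]
  rw [hs']
  refine Submodule.sum_mem _ fun v _ => ?_
  have hv := single_add_single_mem_map_boundary G ω
    (Quot.eqvGen_exact (Quot.out_eq (Quot.mk (openRel G ω) v)).symm)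
  convert Submodule.smul_mem _ (s v) hv using 1
  rw [smul_add, ← Pi.single_smul', ← Pi.single_smul', smul_eq_mul, mul_one]

theorem card_evenSubconfs_mul_two_pow_card :
    (evenSubconfs G ω).card * 2 ^ Fintype.card V
      = 2 ^ openCount G ω * 2 ^ clusterCount G Eq ω := by
  set f := (boundary G).domRestrict (subconfs G ω)
  have hrange : LinearMap.range f = LinearMap.ker (clusterSum G ω) := by
    rw [LinearMap.range_domRestrict]
    exact (map_boundary_le_ker_clusterSum G ω).antisymm (ker_clusterSum_le_map_boundary G ω)
  have hsurj : LinearMap.range (clusterSum G ω) = ⊤ :=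
    LinearMap.range_eq_top.2 fun t =>
      ⟨clusterRep G ω t, LinearMap.congr_fun (clusterSum_comp_clusterRep G ω) t⟩
  have hf := LinearMap.card_ker_mul_card_range f
  have hq := LinearMap.card_ker_mul_card_range (clusterSum G ω)
  rw [hrange, card_ker_boundary_domRestrict, card_subconfs] at hf
  rw [hsurj, Nat.card_congr Submodule.topEquiv.toEquiv, Nat.card_fun, Nat.card_fun, Nat.card_zmod,
    Nat.card_eq_fintype_card (α := V)] at hq
  rw [← hq, ← hf, mul_assoc]
  rfl

theorem rcWeight_two_mul_div {x : ℝ} (hx : 1 + x ≠ 0) :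
    rcWeight G (2 * x / (1 + x)) Eq ω
      = 2 ^ Fintype.card V / (1 + x) ^ Fintype.card G.edgeSet
        * ((evenSubconfs G ω).card * berPMF G x ω) := by
  have hcount : ((evenSubconfs G ω).card : ℝ) * 2 ^ Fintype.card V
      = 2 ^ openCount G ω * 2 ^ clusterCount G Eq ω := by
    exact_mod_cast card_evenSubconfs_mul_two_pow_card G ω
  rw [rcWeight_eq_berPMF_mul, berPMF_two_mul_div G hx]
  field_simp
  linear_combination -berPMF G x ω * hcount

end Clusters

/-- The union of an independent loop O(1) sample (parameter `x`) and a
Bernoulli(x) sample is distributed as the free random-cluster measure with `p = 2x/(1+x)`. -/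
theorem loop_union_bernoulli_is_rc {V : Type} [Fintype V] [DecidableEq V]
    (G : SimpleGraph V) [Fintype G.edgeSet]
    (x : ℝ) (hx : x ∈ Set.Ioo (0 : ℝ) 1) (p : ℝ) (hp : p = 2 * x / (1 + x))
    (ω : G.edgeSet → ZMod 2) :
    ∑ η : G.edgeSet → ZMod 2, ∑ ζ : G.edgeSet → ZMod 2,
        (if unionConf G η ζ = ω then loopPMF G x η * berPMF G x ζ else 0)
      = rcPMF G p Eq ω := by
  -- The sums in the statement get their `Fintype` instance from this `DecidableEq V`, the
  -- lemmas above from the classical one.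
  obtain rfl : ‹DecidableEq V› = fun a b => Classical.propDecidable (a = b) :=
    Subsingleton.elim _ _
  subst hp
  have h1x : 1 + x ≠ 0 := by linarith [hx.1]
  have hc : (2 : ℝ) ^ Fintype.card V / (1 + x) ^ Fintype.card G.edgeSet ≠ 0 :=
    div_ne_zero (pow_ne_zero _ two_ne_zero) (pow_ne_zero _ h1x)
  simp_rw [rcPMF, rcWeight_two_mul_div G _ h1x, ← Finset.mul_sum, mul_div_mul_left _ _ hc,
    sum_card_evenSubconfs_mul_berPMF, ← sum_loopWeight_mul_berPMF_unionConf, Finset.sum_div,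
    ite_div, zero_div, loopPMF_eq, div_mul_eq_mul_div]
end
end
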